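/- arXiv:1310.0489 — 4 statements merged into one kernel-verified Lean document; each statement's English description precedes it below -/
import Mathlib

section
/- Let c > 0. Then there exist ε ∈ (0,1) and β > 0 such that for every n and every finite sequence of nonnegative random variables Z₁,…,Zₙ satisfying P[Z_k > z ∣ Z₁,…,Z_{k-1}] ≤ e^{-cz} for all z > 0 and all k, one has P[∑_{k=1}^{⌊εn⌋} Z_k ≥ n] ≤ e^{-βn}. -/
open MeasureTheory Filter

/-!
Chernoff's method applied to the truncations `Y_k = min Z_k n`. Bounding `e^{cy/2}` by the step
function `e^{c/2} + ∑_{j=1}^{n-1} e^{c(j+1)/2} 1{z > j}` for `y = min z n` and using the tail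
bound turns each conditional exponential moment into a geometric series, so
`E[e^{c Y_k/2} | Z_1, …, Z_{k-1}] ≤ K := e^{c/2} / (1 - e^{-c/2})`. The tower property gives
`E[∏_{k ≤ m} e^{c Y_k/2}] ≤ K^m`, and Markov's inequality gives
`P[∑_{k ≤ m} Z_k ≥ n] ≤ e^{-cn/2} K^m`, which is at most `e^{-cn/4}` once `m log K ≤ cn/4`.
-/

theorem le_add_sum_indicator_of_monotone {φ : ℝ → ℝ} (hφ : Monotone φ) (hφ0 : ∀ x, 0 ≤ φ x)
    {n : ℕ} {y z : ℝ} (hyn : y ≤ n) (hyz : y ≤ z) :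
    φ y ≤ φ 1 + ∑ j ∈ Finset.Icc 1 (n - 1), φ (j + 1) * (Set.Ioi (j : ℝ)).indicator 1 z := by
  have hterm : ∀ j : ℕ, 0 ≤ φ (j + 1) * (Set.Ioi (j : ℝ)).indicator 1 z := fun j =>
    mul_nonneg (hφ0 _) (Set.indicator_nonneg (fun _ _ => zero_le_one) _)
  have hsum : 0 ≤ ∑ j ∈ Finset.Icc 1 (n - 1), φ (j + 1) * (Set.Ioi (j : ℝ)).indicator 1 z :=
    Finset.sum_nonneg fun j _ => hterm j
  rcases le_or_gt y 1 with hy1 | hy1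
  · linarith [hφ hy1]
  -- `y` lies in `(j, j + 1]` for `j = ⌈y⌉₊ - 1`, a valid index since `1 < y ≤ n`.
  set j := ⌈y⌉₊ - 1
  have hceil : 2 ≤ ⌈y⌉₊ := Nat.lt_ceil.mpr (by exact_mod_cast hy1)
  have hjy : (j : ℝ) + 1 = ⌈y⌉₊ := by exact_mod_cast Nat.sub_add_cancel (by omega : 1 ≤ ⌈y⌉₊)
  have hj_mem : j ∈ Finset.Icc 1 (n - 1) := by
    have := Nat.ceil_le.mpr hyn
    exact Finset.mem_Icc.mpr ⟨by omega, by omega⟩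
  have hjz : (j : ℝ) < z := by linarith [Nat.ceil_lt_add_one (by linarith : 0 ≤ y)]
  calc φ y ≤ φ (j + 1) * (Set.Ioi (j : ℝ)).indicator 1 z := by
        rw [Set.indicator_of_mem (Set.mem_Ioi.mpr hjz), Pi.one_apply, mul_one, hjy]
        exact hφ (Nat.le_ceil y)
    _ ≤ ∑ j ∈ Finset.Icc 1 (n - 1), φ (j + 1) * (Set.Ioi (j : ℝ)).indicator 1 z :=
        Finset.single_le_sum (f := fun j : ℕ => φ (j + 1) * (Set.Ioi (j : ℝ)).indicator 1 z)
          (fun i _ => hterm i) hj_mem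
    _ ≤ _ := le_add_of_nonneg_left (hφ0 1)

theorem le_sum_min_of_le_sum {ι : Type*} {s : Finset ι} {x : ι → ℝ} (hx : ∀ i ∈ s, 0 ≤ x i)
    {a : ℝ} (ha0 : 0 ≤ a) (ha : a ≤ ∑ i ∈ s, x i) : a ≤ ∑ i ∈ s, min (x i) a := by
  by_cases hbig : ∃ i ∈ s, a ≤ x i
  · obtain ⟨i, hi, hai⟩ := hbig
    calc a = min (x i) a := (min_eq_right hai).symm
      _ ≤ ∑ i ∈ s, min (x i) a :=
        Finset.single_le_sum (fun j hj => le_min (hx j hj) ha0) hi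
  · push Not at hbig
    rwa [Finset.sum_congr rfl fun i hi => min_eq_left (hbig i hi).le]

noncomputable def mgfBound (c : ℝ) : ℝ := Real.exp (c / 2) / (1 - Real.exp (-(c / 2)))

theorem one_lt_mgfBound {c : ℝ} (hc : 0 < c) : 1 < mgfBound c := by
  have h1 : 1 < Real.exp (c / 2) := Real.one_lt_exp_iff.mpr (by linarith)
  have h2 : 0 < Real.exp (-(c / 2)) := Real.exp_pos _
  have h3 : Real.exp (-(c / 2)) < 1 := Real.exp_lt_one_iff.mpr (by linarith)
  rw [mgfBound, one_lt_div (by linarith)]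
  linarith

theorem exp_add_sum_exp_mul_exp_le_mgfBound {c : ℝ} (hc : 0 < c) (n : ℕ) :
    Real.exp (c / 2) + ∑ j ∈ Finset.Icc 1 (n - 1), Real.exp (c / 2 * (j + 1)) * Real.exp (-c * j)
      ≤ mgfBound c := by
  set r := Real.exp (-(c / 2))
  have hr0 : 0 ≤ r := (Real.exp_pos _).le
  have hr1 : r < 1 := Real.exp_lt_one_iff.mpr (by linarith)
  have hterm : ∀ j : ℕ, Real.exp (c / 2 * (j + 1)) * Real.exp (-c * j) = Real.exp (c / 2) * r ^ j :=
    fun j => by rw [← Real.exp_nat_mul, ← Real.exp_add, ← Real.exp_add]; ring_nf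
  have hgeom : ∑ j ∈ insert 0 (Finset.Icc 1 (n - 1)), r ^ j ≤ (1 - r)⁻¹ :=
    tsum_geometric_of_lt_one hr0 hr1 ▸
      (summable_geometric_of_lt_one hr0 hr1).sum_le_tsum _ fun j _ => pow_nonneg hr0 j
  rw [Finset.sum_insert (by simp), pow_zero] at hgeom
  simp only [hterm, ← Finset.mul_sum]
  calc _ = Real.exp (c / 2) * (1 + ∑ j ∈ Finset.Icc 1 (n - 1), r ^ j) := by ring
    _ ≤ Real.exp (c / 2) * (1 - r)⁻¹ := by gcongr
    _ = mgfBound c := (div_eq_mul_inv _ _).symm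

section

variable {Ω : Type*} {m0 : MeasurableSpace Ω} {μ : Measure Ω}

theorem condExp_le_add_sum_mul [IsFiniteMeasure μ] {m : MeasurableSpace Ω} (hm : m ≤ m0)
    {ι : Type*} (s : Finset ι) {f : Ω → ℝ} {A : ι → Set Ω} {a : ℝ} {b p : ι → ℝ}
    (hf : Integrable f μ) (hA : ∀ j ∈ s, MeasurableSet[m0] (A j)) (hb : ∀ j ∈ s, 0 ≤ b j)
    (hfle : ∀ ω, f ω ≤ a + ∑ j ∈ s, b j * (A j).indicator (fun _ => (1 : ℝ)) ω)
    (hp : ∀ j ∈ s, μ[(A j).indicator (fun _ => (1 : ℝ)) | m] ≤ᵐ[μ] fun _ => p j) :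
    μ[f | m] ≤ᵐ[μ] fun _ => a + ∑ j ∈ s, b j * p j := by
  set ind : ι → Ω → ℝ := fun j => (A j).indicator fun _ => 1
  have hind : ∀ j ∈ s, Integrable (b j • ind j) μ := fun j hj =>
    ((integrable_const (μ := μ) (1 : ℝ)).indicator (hA j hj)).smul (b j)
  set g : Ω → ℝ := (fun _ => a) + ∑ j ∈ s, b j • ind j
  have hg : Integrable g μ := (integrable_const a).add (integrable_finsetSum' s hind)
  have hfg : ∀ ω, f ω ≤ g ω := fun ω => by
    simpa only [g, Pi.add_apply, Finset.sum_apply, Pi.smul_apply, smul_eq_mul] using hfle ω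
  have hsmul : ∀ᵐ ω ∂μ, ∀ j ∈ s, μ[b j • ind j | m] ω = b j * μ[ind j | m] ω :=
    (eventually_all_finset s).mpr fun j _ => condExp_smul (b j) (ind j) m
  filter_upwards [condExp_mono hf hg (ae_of_all _ hfg),
    condExp_add (integrable_const a) (integrable_finsetSum' s hind) m,
    condExp_finsetSum hind m, hsmul, (eventually_all_finset s).mpr hp]
    with ω hmono hadd hsum hsmulω hpω
  calc μ[f | m] ω ≤ μ[g | m] ω := hmono
    _ = a + ∑ j ∈ s, b j * μ[ind j | m] ω := by
        rw [hadd, Pi.add_apply, condExp_const hm, hsum, Finset.sum_apply,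
          Finset.sum_congr rfl hsmulω]
    _ ≤ a + ∑ j ∈ s, b j * p j := by
        gcongr with j hj
        exacts [hb j hj, hpω j hj]

theorem condExp_exp_min_le_mgfBound [IsFiniteMeasure μ] {m : MeasurableSpace Ω} (hm : m ≤ m0)
    {c : ℝ} (hc : 0 < c) (n : ℕ) {Y : Ω → ℝ} (hY : Measurable[m0] Y)
    (htail : ∀ z : ℝ, 0 < z →
      μ[{ω | z < Y ω}.indicator (fun _ => (1 : ℝ)) | m] ≤ᵐ[μ] fun _ => Real.exp (-c * z)) :
    μ[fun ω => Real.exp (c / 2 * min (Y ω) n) | m] ≤ᵐ[μ] fun _ => mgfBound c := by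
  have hint : Integrable (fun ω => Real.exp (c / 2 * min (Y ω) n)) μ := by
    refine .of_bound (by fun_prop) (Real.exp (c / 2 * n)) (ae_of_all _ fun ω => ?_)
    rw [Real.norm_of_nonneg (Real.exp_pos _).le, Real.exp_le_exp]
    exact mul_le_mul_of_nonneg_left (min_le_right _ _) (by linarith)
  have hstep : ∀ ω, Real.exp (c / 2 * min (Y ω) n) ≤ Real.exp (c / 2) + ∑ j ∈ Finset.Icc 1 (n - 1),
      Real.exp (c / 2 * (j + 1)) * {ω | (j : ℝ) < Y ω}.indicator (fun _ => 1) ω := fun ω => by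
    have := le_add_sum_indicator_of_monotone (φ := fun x => Real.exp (c / 2 * x))
      (fun x y hxy => Real.exp_le_exp.mpr (by nlinarith)) (fun _ => (Real.exp_pos _).le)
      (min_le_right (Y ω) n) (min_le_left (Y ω) n)
    rw [mul_one] at this
    exact this
  filter_upwards [condExp_le_add_sum_mul hm (Finset.Icc 1 (n - 1)) hint
    (fun j _ => measurableSet_lt measurable_const hY) (fun _ _ => (Real.exp_pos _).le) hstep
    (fun j hj => htail j (by exact_mod_cast (Finset.mem_Icc.mp hj).1))] with ω hω
  exact hω.trans (exp_add_sum_exp_mul_exp_le_mgfBound hc n)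

theorem integrable_prod_of_nonneg_of_le [IsFiniteMeasure μ] {ι : Type*} (s : Finset ι)
    {X : ι → Ω → ℝ} {C : ℝ} (hX : ∀ i ∈ s, AEStronglyMeasurable (X i) μ)
    (hX0 : ∀ i ω, 0 ≤ X i ω) (hXC : ∀ i ω, X i ω ≤ C) :
    Integrable (fun ω => ∏ i ∈ s, X i ω) μ :=
  .of_bound (Finset.aestronglyMeasurable_fun_prod s hX) (C ^ s.card) <| ae_of_all _ fun ω => by
    rw [Real.norm_of_nonneg (Finset.prod_nonneg fun i _ => hX0 i ω), ← Finset.prod_const]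
    exact Finset.prod_le_prod (fun i _ => hX0 i ω) fun i _ => hXC i ω

theorem integral_prod_le_pow_of_condExp_le [IsProbabilityMeasure μ] (ℱ : Filtration ℕ m0)
    {X : ℕ → Ω → ℝ} {C K : ℝ} (hK : 0 ≤ K) (hX : ∀ k ≥ 1, StronglyMeasurable[ℱ k] (X k))
    (hX0 : ∀ k ω, 0 ≤ X k ω) (hXC : ∀ k ω, X k ω ≤ C) {m : ℕ}
    (hcond : ∀ k < m, μ[X (k + 1) | ℱ k] ≤ᵐ[μ] fun _ => K) :
    ∫ ω, ∏ i ∈ Finset.Icc 1 m, X i ω ∂μ ≤ K ^ m := by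
  set P : ℕ → Ω → ℝ := fun k ω => ∏ i ∈ Finset.Icc 1 k, X i ω
  have hP : ∀ k, StronglyMeasurable[ℱ k] (P k) := fun k =>
    Finset.stronglyMeasurable_fun_prod _ fun i hi =>
      (hX i (Finset.mem_Icc.mp hi).1).mono (ℱ.mono (Finset.mem_Icc.mp hi).2)
  have hP0 : ∀ k ω, 0 ≤ P k ω := fun k ω => Finset.prod_nonneg fun i _ => hX0 i ω
  have hint : ∀ k, Integrable (P k) μ := fun k =>
    integrable_prod_of_nonneg_of_le _ (fun i hi =>
      ((hX i (Finset.mem_Icc.mp hi).1).mono (ℱ.le i)).aestronglyMeasurable) hX0 hXC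
  have hsucc : ∀ k, P (k + 1) = P k * X (k + 1) := fun k => funext fun ω =>
    Finset.prod_Icc_succ_top (by omega) _
  induction m with
  | zero => simp
  | succ m ih =>
    have hXm : Integrable (X (m + 1)) μ :=
      .of_bound ((hX (m + 1) (by omega)).mono (ℱ.le _)).aestronglyMeasurable C
        (ae_of_all _ fun ω => by rw [Real.norm_of_nonneg (hX0 _ ω)]; exact hXC _ ω)
    have hpull : μ[P (m + 1) | ℱ m] ≤ᵐ[μ] fun ω => K * P m ω := by
      rw [hsucc]
      filter_upwards [condExp_mul_of_stronglyMeasurable_left (hP m) (hsucc m ▸ hint (m + 1)) hXm,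
        hcond m m.lt_succ_self] with ω hmul hcondω
      rw [hmul, Pi.mul_apply, mul_comm]
      exact mul_le_mul_of_nonneg_right hcondω (hP0 m ω)
    calc ∫ ω, P (m + 1) ω ∂μ = ∫ ω, μ[P (m + 1) | ℱ m] ω ∂μ := (integral_condExp (ℱ.le m)).symm
      _ ≤ ∫ ω, K * P m ω ∂μ := integral_mono_ae integrable_condExp ((hint m).const_mul K) hpull
      _ = K * ∫ ω, P m ω ∂μ := integral_const_mul K _
      _ ≤ K * K ^ m := by gcongr; exact ih fun k hk => hcond k (by omega)
      _ = K ^ (m + 1) := (pow_succ' K m).symm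

def pastFiltration (Z : ℕ → Ω → ℝ) (hZ : ∀ k, Measurable (Z k)) : Filtration ℕ m0 where
  seq k := ⨆ i ∈ Finset.Icc 1 k, MeasurableSpace.comap (Z i) inferInstance
  mono' _ _ hkl := biSup_mono fun _ hi => Finset.Icc_subset_Icc_right hkl hi
  le' _ := iSup₂_le fun i _ => (hZ i).comap_le

theorem measurable_pastFiltration {Z : ℕ → Ω → ℝ} (hZ : ∀ k, Measurable (Z k)) {k : ℕ}
    (hk : 1 ≤ k) : Measurable[pastFiltration Z hZ k] (Z k) :=
  .of_comap_le <| le_biSup (fun i => MeasurableSpace.comap (Z i) inferInstance)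
    (Finset.mem_Icc.mpr ⟨hk, le_rfl⟩)

theorem measure_sum_ge_le_exp_mul_mgfBound_pow [IsProbabilityMeasure μ] {c : ℝ} (hc : 0 < c)
    {n : ℕ} {Z : ℕ → Ω → ℝ} (hZ : ∀ k, Measurable (Z k)) (hZ0 : ∀ k ω, 0 ≤ Z k ω)
    (htail : ∀ k, 1 ≤ k → k ≤ n → ∀ z : ℝ, 0 < z →
      μ[{ω | z < Z k ω}.indicator (fun _ => (1 : ℝ)) | pastFiltration Z hZ (k - 1)]
        ≤ᵐ[μ] fun _ => Real.exp (-c * z))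
    {m : ℕ} (hmn : m ≤ n) :
    μ {ω | (n : ℝ) ≤ ∑ k ∈ Finset.Icc 1 m, Z k ω}
      ≤ ENNReal.ofReal (Real.exp (-(c / 2) * n) * mgfBound c ^ m) := by
  -- Truncating at `n` keeps the event and makes the exponential moments integrable.
  set X : ℕ → Ω → ℝ := fun k ω => Real.exp (c / 2 * min (Z k ω) n)
  have hsub : {ω | (n : ℝ) ≤ ∑ k ∈ Finset.Icc 1 m, Z k ω}
      ⊆ {ω | Real.exp (c / 2 * n) ≤ ∏ k ∈ Finset.Icc 1 m, X k ω} := fun ω hω => by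
    simp only [Set.mem_ofPred_eq, X, ← Real.exp_sum, ← Finset.mul_sum, Real.exp_le_exp] at hω ⊢
    exact mul_le_mul_of_nonneg_left
      (le_sum_min_of_le_sum (fun k _ => hZ0 k ω) n.cast_nonneg hω) (by linarith)
  have hX0 : ∀ k ω, 0 ≤ X k ω := fun k ω => (Real.exp_pos _).le
  have hbound : ∀ k ω, X k ω ≤ Real.exp (c / 2 * n) := fun k ω =>
    Real.exp_le_exp.mpr (mul_le_mul_of_nonneg_left (min_le_right _ _) (by linarith))
  have hmoment : ∫ ω, ∏ k ∈ Finset.Icc 1 m, X k ω ∂μ ≤ mgfBound c ^ m := by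
    refine integral_prod_le_pow_of_condExp_le (pastFiltration Z hZ)
      (zero_lt_one.trans (one_lt_mgfBound hc)).le (fun k hk => ?_) hX0 hbound (fun k hk => ?_)
    · exact (Real.measurable_exp.comp (measurable_const.mul
        ((measurable_pastFiltration hZ hk).min measurable_const))).stronglyMeasurable
    · simpa using condExp_exp_min_le_mgfBound ((pastFiltration Z hZ).le k) hc n (hZ (k + 1))
        (htail (k + 1) (by omega) (by omega))
  have hmarkov := mul_meas_ge_le_integral_of_nonneg
    (ae_of_all μ fun ω => Finset.prod_nonneg fun k _ => hX0 k ω)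
    (integrable_prod_of_nonneg_of_le (Finset.Icc 1 m) (fun k _ => by fun_prop) hX0 hbound)
    (Real.exp (c / 2 * n))
  calc μ {ω | (n : ℝ) ≤ ∑ k ∈ Finset.Icc 1 m, Z k ω}
      ≤ μ {ω | Real.exp (c / 2 * n) ≤ ∏ k ∈ Finset.Icc 1 m, X k ω} := measure_mono hsub
    _ = ENNReal.ofReal (μ.real {ω | Real.exp (c / 2 * n) ≤ ∏ k ∈ Finset.Icc 1 m, X k ω}) :=
        (ofReal_measureReal).symm
    _ ≤ ENNReal.ofReal (Real.exp (-(c / 2) * n) * mgfBound c ^ m) := by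
        gcongr
        rw [neg_mul, Real.exp_neg, le_inv_mul_iff₀ (Real.exp_pos _)]
        exact hmarkov.trans hmoment

end

/-- Let `c > 0`.  There exist `ε ∈ (0,1)` and `β > 0` such that for every `n` and all
nonnegative random variables `Z₁, …, Zₙ` with conditional tail bound
`P[Z_k > z ∣ Z₁, …, Z_{k-1}] ≤ e^{-c z}` (`z > 0`), one has
`P[∑_{k=1}^{⌊εn⌋} Z_k ≥ n] ≤ e^{-βn}`. -/
theorem sum_exp_tails_large_deviation (c : ℝ) (hc : 0 < c) :
    ∃ ε ∈ Set.Ioo (0 : ℝ) 1, ∃ β > (0 : ℝ),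
      ∀ (Ω : Type) (m0 : MeasurableSpace Ω) (μ : Measure Ω), IsProbabilityMeasure μ →
        ∀ (n : ℕ) (Z : ℕ → Ω → ℝ),
          (∀ k, Measurable (Z k)) →
          (∀ k ω, 0 ≤ Z k ω) →
          (∀ k, 1 ≤ k → k ≤ n → ∀ z : ℝ, 0 < z →
            ∀ᵐ ω ∂μ,
              (μ[({ω | z < Z k ω}).indicator (fun _ => (1 : ℝ))|
                  ⨆ i ∈ Finset.Icc 1 (k - 1), MeasurableSpace.comap (Z i) inferInstance]) ω
                ≤ Real.exp (-c * z)) →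
          μ {ω | (n : ℝ) ≤ ∑ k ∈ Finset.Icc 1 ⌊ε * n⌋₊, Z k ω}
            ≤ ENNReal.ofReal (Real.exp (-β * n)) := by
  have hK := one_lt_mgfBound hc
  have hlogK : 0 < Real.log (mgfBound c) := Real.log_pos hK
  set ε := min (1 / 2) (c / (4 * Real.log (mgfBound c)))
  refine ⟨ε, ⟨lt_min (by norm_num) (by positivity), (min_le_left _ _).trans_lt (by norm_num)⟩,
    c / 4, by positivity, fun Ω _ μ _ n Z hZ hZ0 htail => ?_⟩
  have hεn : ε * n ≤ n :=
    mul_le_of_le_one_left n.cast_nonneg ((min_le_left _ _).trans (by norm_num))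
  refine (measure_sum_ge_le_exp_mul_mgfBound_pow hc hZ hZ0 htail (Nat.floor_le_of_le hεn)).trans
    (ENNReal.ofReal_le_ofReal ?_)
  have hpow : mgfBound c ^ ⌊ε * n⌋₊ ≤ Real.exp (c / 4 * n) := by
    rw [← Real.exp_log (pow_pos (zero_lt_one.trans hK) _), Real.log_pow, Real.exp_le_exp]
    calc ⌊ε * n⌋₊ * Real.log (mgfBound c) ≤ ε * n * Real.log (mgfBound c) := by
          gcongr; exact Nat.floor_le (by positivity)
      _ ≤ c / (4 * Real.log (mgfBound c)) * n * Real.log (mgfBound c) := by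
          gcongr; exact min_le_right _ _
      _ = c / 4 * n := by field_simp
  calc Real.exp (-(c / 2) * n) * mgfBound c ^ ⌊ε * n⌋₊
      ≤ Real.exp (-(c / 2) * n) * Real.exp (c / 4 * n) := by gcongr
    _ = Real.exp (-(c / 4) * n) := by rw [← Real.exp_add]; ring_nf
end

section
/- Let (Aₙ)_{n≥1} be events adapted to a filtration (Fₙ) with P(A_n ∣ F_{n-1}) ≥ p > 0 almost surely for all n. Then liminf_{n→∞} (1/n)·∑_{k=1}^{n} 1_{A_k} ≥ p almost surely. -/
open MeasureTheory Filter Topology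

/-!
Doob's decomposition splits the counting process `N n = ∑_{k ≤ n} 1_{A k}` into a martingale
`M` and a predictable part `P`, and the hypothesis says `P n ≥ n p`. The increments of `M` are
bounded by `2`, and martingale increments are orthogonal, so `E[M n ^ 2] ≤ 4 n`. Chebyshev's
inequality and Borel–Cantelli along the squares give `M (n ^ 2) / n ^ 2 → 0` a.s., and the bounded
increments interpolate between consecutive squares, so `M n / n → 0` a.s.
-/

theorem abs_sub_le_mul_of_abs_sub_succ_le {u : ℕ → ℝ} {R : ℝ}
    (hu : ∀ n, |u (n + 1) - u n| ≤ R) {m n : ℕ} (hmn : m ≤ n) :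
    |u n - u m| ≤ (n - m : ℕ) * R := by
  have := dist_le_Ico_sum_of_dist_le (f := u) hmn (d := fun _ => R) fun _ _ => by
    rw [Real.dist_eq, abs_sub_comm]
    exact hu _
  simpa [Real.dist_eq, abs_sub_comm] using this

theorem tendsto_div_of_tendsto_div_sq {u : ℕ → ℝ} {R : ℝ} (hu : ∀ n, |u (n + 1) - u n| ≤ R)
    (h : Tendsto (fun n : ℕ => u (n ^ 2) / (n : ℝ) ^ 2) atTop (𝓝 0)) :
    Tendsto (fun n : ℕ => u n / n) atTop (𝓝 0) := by
  have hR : 0 ≤ R := (abs_nonneg _).trans (hu 0)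
  have hbound : ∀ m : ℕ, 1 ≤ m →
      ‖u m / m‖ ≤ |u (m.sqrt ^ 2) / (m.sqrt : ℝ) ^ 2| + 2 * R / m.sqrt := by
    intro m hm
    set k := m.sqrt
    have hk : (0 : ℝ) < k := by exact_mod_cast Nat.sqrt_pos.2 hm
    have hkm : k ^ 2 ≤ m := Nat.sqrt_le' m
    have hgap : m - k ^ 2 ≤ 2 * k := by
      have hlt : m < (k + 1) ^ 2 := Nat.lt_succ_sqrt' m
      have hsq : (k + 1) ^ 2 = k ^ 2 + 2 * k + 1 := by ring
      omega
    have hkm' : (k : ℝ) ^ 2 ≤ m := by exact_mod_cast hkm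
    have hum : |u m| ≤ |u (k ^ 2)| + 2 * k * R := by
      have hdiff := abs_sub_le_mul_of_abs_sub_succ_le hu hkm
      have : ((m - k ^ 2 : ℕ) : ℝ) * R ≤ 2 * k * R := by
        gcongr
        exact_mod_cast hgap
      linarith [abs_sub_abs_le_abs_sub (u m) (u (k ^ 2))]
    calc ‖u m / m‖ = |u m| / m := by rw [Real.norm_eq_abs, abs_div, Nat.abs_cast]
      _ ≤ (|u (k ^ 2)| + 2 * k * R) / k ^ 2 := by gcongr
      _ = |u (k ^ 2) / (k : ℝ) ^ 2| + 2 * R / k := by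
        rw [abs_div, abs_of_pos (by positivity : (0 : ℝ) < k ^ 2)]
        field_simp
  have hsqrt : Tendsto Nat.sqrt atTop atTop :=
    tendsto_atTop_atTop.2 fun b => ⟨b * b, fun _ => Nat.le_sqrt.2⟩
  have hlim : Tendsto (fun m : ℕ => |u (m.sqrt ^ 2) / (m.sqrt : ℝ) ^ 2| + 2 * R / m.sqrt)
      atTop (𝓝 0) := by
    have := (h.abs.add (tendsto_const_div_atTop_nhds_zero_nat (2 * R))).comp hsqrt
    rwa [abs_zero, add_zero] at this
  exact squeeze_zero_norm' ((eventually_ge_atTop 1).mono hbound) hlim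

theorem le_liminf_of_tendsto_of_le_add {α : Type*} {l : Filter α} [l.NeBot] {x a : α → ℝ}
    {p : ℝ} (hx : IsBoundedUnder (· ≤ ·) l x) (ha : Tendsto a l (𝓝 0))
    (h : ∀ᶠ n in l, p + a n ≤ x n) : p ≤ liminf x l := by
  have hpa : Tendsto (fun n => p + a n) l (𝓝 p) := by simpa using ha.const_add p
  rw [← hpa.liminf_eq]
  exact liminf_le_liminf h hpa.isBoundedUnder_ge hx.isCoboundedUnder_ge

namespace MeasureTheory

variable {Ω : Type*} {m0 : MeasurableSpace Ω} {μ : Measure Ω}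

theorem ae_tendsto_zero_of_tsum_measure_le_abs_ne_top {Y : ℕ → Ω → ℝ}
    (h : ∀ ε > 0, ∑' n, μ {ω | ε ≤ |Y n ω|} ≠ ⊤) :
    ∀ᵐ ω ∂μ, Tendsto (fun n => Y n ω) atTop (𝓝 0) := by
  have hev : ∀ᵐ ω ∂μ, ∀ j : ℕ, ∀ᶠ n in atTop, |Y n ω| < 1 / ((j : ℝ) + 1) := by
    refine ae_all_iff.2 fun j => ?_
    filter_upwards [ae_eventually_notMem (h _ Nat.one_div_pos_of_nat)] with ω hω
    exact hω.mono fun n hn => not_le.1 hn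
  filter_upwards [hev] with ω hω
  refine Metric.tendsto_nhds.2 fun ε hε => ?_
  obtain ⟨j, hj⟩ := exists_nat_one_div_lt hε
  exact (hω j).mono fun n hn => by simpa [Real.dist_eq] using hn.trans hj

theorem meas_abs_ge_le_integral_sq_div_sq [IsFiniteMeasure μ] {X : Ω → ℝ}
    (hX : Integrable (fun ω => X ω ^ 2) μ) {ε : ℝ} (hε : 0 < ε) :
    μ {ω | ε ≤ |X ω|} ≤ ENNReal.ofReal ((∫ ω, X ω ^ 2 ∂μ) / ε ^ 2) := by
  have hset : {ω | ε ≤ |X ω|} = {ω | ε ^ 2 ≤ X ω ^ 2} := by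
    ext ω
    show ε ≤ |X ω| ↔ ε ^ 2 ≤ X ω ^ 2
    rw [← sq_abs (X ω), sq_le_sq₀ hε.le (abs_nonneg _)]
  have hmarkov := mul_meas_ge_le_integral_of_nonneg (ae_of_all _ fun ω => sq_nonneg (X ω)) hX
    (ε ^ 2)
  rw [hset, ← ofReal_measureReal]
  exact ENNReal.ofReal_le_ofReal ((le_div_iff₀' (by positivity)).2 hmarkov)

variable {ℱ : Filtration ℕ m0} {M : ℕ → Ω → ℝ} {R : ℝ}

theorem Martingale.integral_mul_sub_eq_zero {ι : Type*} [Preorder ι] [IsFiniteMeasure μ]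
    {ℱ : Filtration ι m0} {M : ι → Ω → ℝ} (hM : Martingale M ℱ μ) {i j : ι} (hij : i ≤ j)
    {X : Ω → ℝ} (hX : StronglyMeasurable[ℱ i] X) (hXM : Integrable (X * (M j - M i)) μ) :
    ∫ ω, X ω * (M j ω - M i ω) ∂μ = 0 := by
  have hcond : μ[M j - M i | ℱ i] =ᵐ[μ] 0 := by
    filter_upwards [condExp_sub (hM.integrable j) (hM.integrable i) (ℱ i), hM.condExp_ae_eq hij,
      (condExp_of_stronglyMeasurable (ℱ.le i) (hM.stronglyAdapted i) (hM.integrable i)).eventuallyEq]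
      with ω h₁ h₂ h₃
    simp [h₁, h₂, h₃]
  calc ∫ ω, X ω * (M j ω - M i ω) ∂μ = ∫ ω, (μ[X * (M j - M i) | ℱ i]) ω ∂μ :=
        (integral_condExp (ℱ.le i)).symm
    _ = ∫ ω, X ω * (μ[M j - M i | ℱ i]) ω ∂μ :=
        integral_congr_ae (condExp_mul_of_stronglyMeasurable_left hX hXM
          ((hM.integrable j).sub (hM.integrable i)))
    _ = 0 := by
        have hzero : (fun ω => X ω * (μ[M j - M i | ℱ i]) ω) =ᵐ[μ] 0 :=
          hcond.mono fun ω hω => by simp [hω]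
        simp [integral_congr_ae hzero]

theorem ae_abs_le_mul_of_abs_sub_succ_le (h0 : M 0 = 0)
    (hbdd : ∀ᵐ ω ∂μ, ∀ n, |M (n + 1) ω - M n ω| ≤ R) (n : ℕ) :
    ∀ᵐ ω ∂μ, |M n ω| ≤ n * R :=
  hbdd.mono fun ω hω => by
    simpa [h0] using abs_sub_le_mul_of_abs_sub_succ_le (u := fun k => M k ω) hω (Nat.zero_le n)

theorem integrable_sq_of_abs_sub_succ_le [IsFiniteMeasure μ] {n : ℕ}
    (hMn : AEStronglyMeasurable (M n) μ) (h0 : M 0 = 0)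
    (hbdd : ∀ᵐ ω ∂μ, ∀ n, |M (n + 1) ω - M n ω| ≤ R) :
    Integrable (fun ω => M n ω ^ 2) μ := by
  refine Integrable.of_bound (hMn.pow 2) ((n * R) ^ 2) ?_
  filter_upwards [ae_abs_le_mul_of_abs_sub_succ_le h0 hbdd n] with ω hω
  rw [Real.norm_eq_abs, abs_pow]
  exact pow_le_pow_left₀ (abs_nonneg _) hω 2

theorem Martingale.integral_sq_le [IsProbabilityMeasure μ] (hM : Martingale M ℱ μ) (h0 : M 0 = 0)
    (hbdd : ∀ᵐ ω ∂μ, ∀ n, |M (n + 1) ω - M n ω| ≤ R) (n : ℕ) :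
    ∫ ω, M n ω ^ 2 ∂μ ≤ n * R ^ 2 := by
  induction n with
  | zero => simp [h0]
  | succ n ih =>
    set D := M (n + 1) - M n
    have hmeas : ∀ k, AEStronglyMeasurable (M k) μ := fun k => (hM.integrable k).1
    have hDint : Integrable D μ := (hM.integrable _).sub (hM.integrable _)
    have hMD : Integrable (M n * D) μ :=
      hDint.bdd_mul (hmeas n) (by simpa using ae_abs_le_mul_of_abs_sub_succ_le h0 hbdd n)
    have hD : ∀ᵐ ω ∂μ, |D ω| ≤ R := hbdd.mono fun ω hω => hω n
    have hDD : Integrable (fun ω => D ω * D ω) μ :=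
      hDint.bdd_mul ((hmeas _).sub (hmeas _)) (by simpa using hD)
    have hD2 : ∫ ω, D ω * D ω ∂μ ≤ R ^ 2 := by
      calc ∫ ω, D ω * D ω ∂μ ≤ ∫ _ω, R ^ 2 ∂μ :=
            integral_mono_ae hDD (integrable_const _) <| hD.mono fun ω hω => by
              show D ω * D ω ≤ R ^ 2
              rw [← sq, ← sq_abs]
              exact pow_le_pow_left₀ (abs_nonneg _) hω 2
        _ = R ^ 2 := by simp
    have horth : ∫ ω, M n ω * D ω ∂μ = 0 :=
      hM.integral_mul_sub_eq_zero n.le_succ (hM.stronglyAdapted n) hMD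
    calc ∫ ω, M (n + 1) ω ^ 2 ∂μ
        = ∫ ω, (M n ω ^ 2 + 2 * (M n ω * D ω) + D ω * D ω) ∂μ := by
          congr 1 with ω
          simp only [D, Pi.sub_apply]
          ring
      _ = ∫ ω, M n ω ^ 2 ∂μ + 2 * ∫ ω, M n ω * D ω ∂μ + ∫ ω, D ω * D ω ∂μ := by
          have hsq := integrable_sq_of_abs_sub_succ_le (hmeas n) h0 hbdd
          have h2MD : Integrable (fun ω => 2 * (M n ω * D ω)) μ := hMD.const_mul 2
          rw [integral_add ?_ hDD, integral_add hsq h2MD, integral_const_mul]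
          exact hsq.add h2MD
      _ ≤ n * R ^ 2 + 2 * 0 + R ^ 2 := by rw [horth]; gcongr
      _ = (n + 1 : ℕ) * R ^ 2 := by push_cast; ring

theorem Martingale.ae_tendsto_div_sq [IsProbabilityMeasure μ] (hM : Martingale M ℱ μ)
    (h0 : M 0 = 0) (hbdd : ∀ᵐ ω ∂μ, ∀ n, |M (n + 1) ω - M n ω| ≤ R) :
    ∀ᵐ ω ∂μ, Tendsto (fun n : ℕ => M (n ^ 2) ω / (n : ℝ) ^ 2) atTop (𝓝 0) := by
  refine ae_tendsto_zero_of_tsum_measure_le_abs_ne_top fun ε hε => ?_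
  have hchebyshev : ∀ n : ℕ, μ {ω | ε ≤ |M (n ^ 2) ω / (n : ℝ) ^ 2|}
      ≤ ENNReal.ofReal (R ^ 2 / ε ^ 2 * (1 / (n : ℝ) ^ 2)) := by
    intro n
    have hint := (integrable_sq_of_abs_sub_succ_le (hM.integrable (n ^ 2)).1 h0 hbdd).div_const
      (((n : ℝ) ^ 2) ^ 2)
    simp_rw [← div_pow] at hint
    refine (meas_abs_ge_le_integral_sq_div_sq hint hε).trans (ENNReal.ofReal_le_ofReal ?_)
    have hvar := hM.integral_sq_le h0 hbdd (n ^ 2)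
    simp_rw [div_pow, integral_div]
    push_cast at hvar
    rcases Nat.eq_zero_or_pos n with rfl | hn
    · simp
    have hn' : (0 : ℝ) < n := by exact_mod_cast hn
    rw [div_div, div_le_iff₀ (by positivity)]
    calc ∫ ω, M (n ^ 2) ω ^ 2 ∂μ ≤ (n : ℝ) ^ 2 * R ^ 2 := hvar
      _ = _ := by field_simp
  have hsum : Summable fun n : ℕ => R ^ 2 / ε ^ 2 * (1 / (n : ℝ) ^ 2) :=
    (Real.summable_one_div_nat_pow.2 one_lt_two).mul_left _
  refine ne_top_of_le_ne_top ?_ (ENNReal.tsum_le_tsum hchebyshev)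
  rw [← ENNReal.ofReal_tsum_of_nonneg (fun n => by positivity) hsum]
  exact ENNReal.ofReal_ne_top

theorem Martingale.ae_tendsto_div_atTop [IsProbabilityMeasure μ] (hM : Martingale M ℱ μ)
    (h0 : M 0 = 0) (hbdd : ∀ᵐ ω ∂μ, ∀ n, |M (n + 1) ω - M n ω| ≤ R) :
    ∀ᵐ ω ∂μ, Tendsto (fun n : ℕ => M n ω / n) atTop (𝓝 0) := by
  filter_upwards [hM.ae_tendsto_div_sq h0 hbdd, hbdd] with ω hsq hω
  exact tendsto_div_of_tendsto_div_sq (u := fun n => M n ω) hω hsq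

namespace BorelCantelli

variable {s : ℕ → Set Ω}

theorem sum_Icc_indicator_eq_process (s : ℕ → Set Ω) (ω : Ω) (n : ℕ) :
    ∑ k ∈ Finset.Icc 1 n, (s k).indicator (fun _ => (1 : ℝ)) ω = process s n ω := by
  rw [process, Finset.sum_apply, Finset.range_eq_Ico,
    Finset.sum_Ico_add' (fun k => (s k).indicator 1 ω) 0 n 1]
  rfl

theorem process_le (s : ℕ → Set Ω) (ω : Ω) (n : ℕ) : process s n ω ≤ n := by
  rw [process, Finset.sum_apply]
  calc ∑ k ∈ Finset.range n, (s (k + 1)).indicator 1 ω ≤ (Finset.range n).card • (1 : ℝ) :=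
        Finset.sum_le_card_nsmul _ _ _ fun k _ =>
          Set.indicator_le' (fun _ _ => le_rfl) (fun _ _ => zero_le_one) ω
    _ = n := by simp

theorem natCast_mul_le_predictablePart_process {ℱ : Filtration ℕ m0} {p : ℝ} {ω : Ω}
    (h : ∀ k, p ≤ μ[(s (k + 1)).indicator 1 | ℱ k] ω) (n : ℕ) :
    n * p ≤ predictablePart (process s) ℱ μ n ω := by
  rw [predictablePart_process_ae_eq, Finset.sum_apply]
  calc (n : ℝ) * p = (Finset.range n).card • p := by simp
    _ ≤ _ := Finset.card_nsmul_le_sum _ _ p fun k _ => h k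

theorem ae_tendsto_martingalePart_process_div [IsProbabilityMeasure μ] {ℱ : Filtration ℕ m0}
    (hs : ∀ n, MeasurableSet[ℱ n] (s n)) :
    ∀ᵐ ω ∂μ, Tendsto (fun n : ℕ => martingalePart (process s) ℱ μ n ω / n) atTop (𝓝 0) := by
  have hM : Martingale (martingalePart (process s) ℱ μ) ℱ μ :=
    martingale_martingalePart (stronglyAdapted_process hs) (integrable_process μ hs)
  have hM0 : martingalePart (process s) ℱ μ 0 = 0 := by
    rw [martingalePart_zero, process_zero]
  have hbdd := martingalePart_bdd_difference (μ := μ) (f := process s) ℱ (R := 1)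
    (ae_of_all μ fun ω n => by
      simpa only [Real.norm_eq_abs, NNReal.coe_one] using process_difference_le s ω n)
  simp only [Real.norm_eq_abs] at hbdd
  exact hM.ae_tendsto_div_atTop hM0 hbdd

end BorelCantelli

end MeasureTheory

theorem liminf_freq_of_cond_prob_bound_general
    {Ω : Type*} {m0 : MeasurableSpace Ω} (μ : Measure Ω) [IsProbabilityMeasure μ]
    (ℱ : Filtration ℕ m0) (A : ℕ → Set Ω)
    (hA : ∀ n, MeasurableSet[ℱ n] (A n))
    (p : ℝ)
    (hcond : ∀ n, 1 ≤ n →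
      ∀ᵐ ω ∂μ, p ≤ (μ[(A n).indicator (fun _ => (1 : ℝ))|ℱ (n - 1)]) ω) :
    ∀ᵐ ω ∂μ, p ≤
      Filter.liminf
        (fun n : ℕ => (∑ k ∈ Finset.Icc 1 n, (A k).indicator (fun _ => (1 : ℝ)) ω) / n)
        atTop := by
  open BorelCantelli in
  filter_upwards [ae_tendsto_martingalePart_process_div (μ := μ) hA,
    ae_all_iff.2 fun k => hcond (k + 1) k.succ_pos] with ω hlln hω
  simp_rw [sum_Icc_indicator_eq_process]
  refine le_liminf_of_tendsto_of_le_add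
    (isBoundedUnder_of ⟨1, fun n => div_le_one_of_le₀ (process_le A ω n) n.cast_nonneg⟩) hlln ?_
  filter_upwards [eventually_gt_atTop 0] with n hn
  have hpred : n * p ≤ predictablePart (process A) ℱ μ n ω :=
    natCast_mul_le_predictablePart_process hω n
  rw [← congr_fun (congr_fun (martingalePart_add_predictablePart ℱ μ (process A)) n) ω,
    Pi.add_apply, Pi.add_apply, add_div, add_comm]
  gcongr
  rwa [le_div_iff₀ (by exact_mod_cast hn), mul_comm]

/-- If events `Aₙ` are adapted to a filtration `(ℱₙ)` and satisfy
`P(Aₙ ∣ ℱ_{n-1}) ≥ p > 0` a.s. for every `n ≥ 1`, then a.s.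
`liminf (1/n) ∑_{k=1}^n 1_{A_k} ≥ p`. -/
theorem liminf_freq_of_cond_prob_bound
    {Ω : Type*} {m0 : MeasurableSpace Ω} (μ : Measure Ω) [IsProbabilityMeasure μ]
    (ℱ : Filtration ℕ m0) (A : ℕ → Set Ω)
    (hA : ∀ n, MeasurableSet[ℱ n] (A n))
    (p : ℝ) (hp : 0 < p)
    (hcond : ∀ n, 1 ≤ n →
      ∀ᵐ ω ∂μ, p ≤ (μ[(A n).indicator (fun _ => (1 : ℝ))|ℱ (n - 1)]) ω) :
    ∀ᵐ ω ∂μ, p ≤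
      Filter.liminf
        (fun n : ℕ => (∑ k ∈ Finset.Icc 1 n, (A k).indicator (fun _ => (1 : ℝ)) ω) / n)
        atTop :=
  liminf_freq_of_cond_prob_bound_general μ ℱ A hA p hcond
end

section
/- Let G be a connected graph with spectral radius ρ := ρ(G) < 1, let n ≥ 2, ε > 0, and L > 2e². For simple random walk X on G started at a fixed vertex, the probability that the number of times t ∈ [1,n] lying inside some traversed cycle of length greater than L within X restricted to [1,n] is at least εn, is bounded by e^{(6n/L)·log L} · ρ^{εn/3}/(1-ρ). -/
/-- A multigraph given by oriented edges with tail, head, and an edge-reversal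
involution (loops are edges with `rev e = e`). -/
structure Multigraph (V E : Type) where
  tail : E → V
  head : E → V
  rev : E → E
  rev_rev : ∀ e, rev (rev e) = e
  head_rev : ∀ e, head (rev e) = tail e
  tail_rev : ∀ e, tail (rev e) = head e

namespace Multigraph

variable {V E : Type} (G : Multigraph V E)

/-- `σ` is a path: consecutive edges are adjacent. -/
def IsPath {n : ℕ} (σ : Fin n → E) : Prop :=
  ∀ (i : Fin n) (h : i.1 + 1 < n), G.head (σ i) = G.tail (σ ⟨i.1 + 1, h⟩)

/-- The path `σ` starts at `x`. -/
def StartsAt {n : ℕ} (σ : Fin n → E) (x : V) : Prop :=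
  ∀ h : 0 < n, G.tail (σ ⟨0, h⟩) = x

/-- The path `σ` ends at `x`. -/
def EndsAt {n : ℕ} (σ : Fin n → E) (x : V) : Prop :=
  ∀ h : 0 < n, G.head (σ ⟨n - 1, Nat.sub_lt h Nat.one_pos⟩) = x

/-- `σ` is a cycle based at `x`. -/
def IsCycleAt {n : ℕ} (σ : Fin n → E) (x : V) : Prop :=
  G.IsPath σ ∧ G.StartsAt σ x ∧ G.EndsAt σ x

/-- `σ` is non-backtracking: no edge is immediately followed by its reversal. -/
def NonBacktracking {n : ℕ} (σ : Fin n → E) : Prop :=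
  ∀ (i : Fin n) (h : i.1 + 1 < n), σ ⟨i.1 + 1, h⟩ ≠ G.rev (σ i)

/-- `σ` is fully non-backtracking (as a cycle): it is a single loop, or its first
edge is not the reversal of its last edge. -/
def FullyNB {n : ℕ} (σ : Fin n → E) : Prop :=
  n = 1 ∨ ∀ h : 0 < n, σ ⟨0, h⟩ ≠ G.rev (σ ⟨n - 1, Nat.sub_lt h Nat.one_pos⟩)

/-- The number of `n`-step paths from `x` to `y`. -/
noncomputable def pathCount (n : ℕ) (x y : V) : ℕ :=
  Nat.card {σ : Fin n → E // G.IsPath σ ∧ G.StartsAt σ x ∧ G.EndsAt σ y}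

/-- The number of `n`-step cycles based at `x`. -/
noncomputable def cycleCount (n : ℕ) (x : V) : ℕ := G.pathCount n x x

/-- `bₙ(x)`: the number of non-backtracking cycles of length `n` at `x`. -/
noncomputable def nbCycleCount (n : ℕ) (x : V) : ℕ :=
  Nat.card {σ : Fin n → E // G.IsCycleAt σ x ∧ G.NonBacktracking σ}

/-- `b*ₙ(x)`: the number of fully non-backtracking cycles of length `n` at `x`. -/
noncomputable def fnbCycleCount (n : ℕ) (x : V) : ℕ :=
  Nat.card {σ : Fin n → E // G.IsCycleAt σ x ∧ G.NonBacktracking σ ∧ G.FullyNB σ}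

/-- `G` is `d`-regular: every vertex has exactly `d` outgoing edges. -/
def IsRegular (d : ℕ) : Prop := ∀ v : V, Nat.card {e : E // G.tail e = v} = d

/-- `G` is connected. -/
def Connected : Prop :=
  ∀ x y : V, x ≠ y → ∃ n : ℕ, 1 ≤ n ∧ ∃ σ : Fin n → E,
    G.IsPath σ ∧ G.StartsAt σ x ∧ G.EndsAt σ y

/-- `G` is vertex-transitive. -/
def IsTransitive : Prop :=
  ∀ x y : V, ∃ (φ : V ≃ V) (ψ : E ≃ E),
    (∀ e, G.tail (ψ e) = φ (G.tail e)) ∧ (∀ e, G.head (ψ e) = φ (G.head e)) ∧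
    (∀ e, G.rev (ψ e) = ψ (G.rev e)) ∧ φ x = y

/-- The spectral radius `ρ(G) = limsup pₙ(o,o)^{1/n}` of simple random walk on a
`d`-regular multigraph, based at `o`. -/
noncomputable def spectralRadius (d : ℕ) (o : V) : ℝ :=
  Filter.limsup (fun n : ℕ => ((G.cycleCount n o : ℝ) / d ^ n) ^ (1 / (n : ℝ)))
    Filter.atTop

/-- The cogrowth `cogr(G) = limsup bₙ(o)^{1/n}`. -/
noncomputable def cogrowth (o : V) : ℝ :=
  Filter.limsup (fun n : ℕ => (G.nbCycleCount n o : ℝ) ^ (1 / (n : ℝ))) Filter.atTop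

end Multigraph

namespace Multigraph

variable {V E : Type} (G : Multigraph V E)

/-- The (out-)degree of a vertex. -/
noncomputable def degree (v : V) : ℕ := Nat.card {e : E // G.tail e = v}

/-- The probability of a given path under simple random walk. -/
noncomputable def pathWeight {n : ℕ} (σ : Fin n → E) : ℝ :=
  ∏ i : Fin n, ((G.degree (G.tail (σ i)) : ℝ))⁻¹

/-- `t` is an `L⁺`-cycle time of the path `σ`: some segment `(σ_s, …, σ_u)` with
`s ≤ t ≤ u` is a cycle of length greater than `L`. -/
def IsLongCycleTime {n : ℕ} (σ : Fin n → E) (L : ℝ) (t : Fin n) : Prop :=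
  ∃ s u : Fin n, s ≤ t ∧ t ≤ u ∧ G.tail (σ s) = G.head (σ u) ∧
    L < (u.1 : ℝ) - s.1 + 1

end Multigraph

/-!
A walk with at least `εn` long-cycle times contains, by a greedy Vitali-type selection, a family
of pairwise disjoint closed segments, each longer than `L`, of total length at least `εn/3`.
By the Markov property, the walk closes up along a fixed such family with probability at most
`ρ` to the total length. A disjoint family of intervals in `[0, n)` of lengths `> L` has at most
`n/L` members and is determined by its sets of left and right endpoints, so there are at most
`(∑_{j ≤ n/L} C(n, j))² ≤ e^{(6n/L) log L}` such families; a union bound over them finishes.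
-/

open Finset Real
open scoped ENNReal

lemma Fin.append_mk_of_lt {α : Type*} {a b k : ℕ} (u : Fin a → α) (v : Fin b → α)
    (hk : k < a + b) (h : k < a) : Fin.append u v ⟨k, hk⟩ = u ⟨k, h⟩ :=
  Fin.append_left u v ⟨k, h⟩

lemma Fin.append_mk_of_le {α : Type*} {a b k : ℕ} (u : Fin a → α) (v : Fin b → α)
    (hk : k < a + b) (h : a ≤ k) : Fin.append u v ⟨k, hk⟩ = v ⟨k - a, by omega⟩ := by
  rw [← Fin.append_right u v ⟨k - a, by omega⟩]
  congr 1
  ext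
  simp only [Fin.natAdd_mk]
  omega

/-- The pair `p` stands for the interval `[p.1, p.2]` of `ℕ`. -/
def IsIntervalPacking (I : Finset (ℕ × ℕ)) : Prop :=
  (∀ p ∈ I, p.1 ≤ p.2) ∧ (I : Set (ℕ × ℕ)).PairwiseDisjoint fun p => Icc p.1 p.2

open Classical in
noncomputable def longIntervalPackings (n : ℕ) (L : ℝ) : Finset (Finset (ℕ × ℕ)) :=
  (range n ×ˢ range n).powerset.filter fun I =>
    IsIntervalPacking I ∧ ∀ p ∈ I, p.2 < n ∧ L < #(Icc p.1 p.2)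

lemma mem_longIntervalPackings {n : ℕ} {L : ℝ} {I : Finset (ℕ × ℕ)} :
    I ∈ longIntervalPackings n L ↔ IsIntervalPacking I ∧ ∀ p ∈ I, p.2 < n ∧ L < #(Icc p.1 p.2) := by
  classical
  simp only [longIntervalPackings, mem_filter, mem_powerset, and_iff_right_iff_imp]
  intro ⟨hI, hlong⟩ p hp
  have := hI.1 p hp
  have := (hlong p hp).1
  simp only [mem_product, mem_range]
  omega

theorem exists_isIntervalPacking_card_biUnion_Icc_le (J : Finset (ℕ × ℕ))
    (hJ : ∀ p ∈ J, p.1 ≤ p.2) :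
    ∃ I ⊆ J, IsIntervalPacking I ∧
      #(J.biUnion fun p => Icc p.1 p.2) ≤ 3 * ∑ p ∈ I, #(Icc p.1 p.2) := by
  induction J using Finset.strongInduction with
  | H J ih =>
  rcases J.eq_empty_or_nonempty with rfl | hne
  · exact ⟨∅, subset_rfl, by simp [IsIntervalPacking]⟩
  obtain ⟨b, hbJ, hbmax⟩ := exists_max_image J (fun p => #(Icc p.1 p.2)) hne
  have hb : b.1 ≤ b.2 := hJ b hbJ
  set J' := J.filter fun p => Disjoint (Icc p.1 p.2) (Icc b.1 b.2)
  have hbJ' : b ∉ J' := by simp [J', hb]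
  obtain ⟨I', hI'J', ⟨-, hI'disj⟩, hI'card⟩ :=
    ih J' (filter_ssubset.mpr ⟨b, hbJ, by simp [hb]⟩) fun p hp => hJ p (filter_subset _ J hp)
  have hIJ : insert b I' ⊆ J := insert_subset hbJ (hI'J'.trans (filter_subset _ J))
  refine ⟨insert b I', hIJ, ⟨fun p hp => hJ p (hIJ hp), ?_⟩, ?_⟩
  · rw [coe_insert]
    exact hI'disj.insert fun q hq _ => (mem_filter.mp (hI'J' hq)).2.symm
  -- greedy choice: an interval meeting `b` is no longer than `b`, so lies in `b` tripled
  have hcover : (J.biUnion fun p => Icc p.1 p.2) ⊆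
      (J'.biUnion fun p => Icc p.1 p.2) ∪ Icc (b.1 - (b.2 - b.1)) (b.2 + (b.2 - b.1)) := by
    intro t ht
    obtain ⟨p, hpJ, htp⟩ := mem_biUnion.mp ht
    by_cases hpb : Disjoint (Icc p.1 p.2) (Icc b.1 b.2)
    · exact mem_union_left _ (mem_biUnion.mpr ⟨p, mem_filter.mpr ⟨hpJ, hpb⟩, htp⟩)
    · obtain ⟨s, hsp, hsb⟩ := not_disjoint_iff.mp hpb
      have hlen := hbmax p hpJ
      simp only [mem_Icc, Nat.card_Icc] at hsp hsb htp hlen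
      exact mem_union_right _ (mem_Icc.mpr ⟨by omega, by omega⟩)
  calc #(J.biUnion fun p => Icc p.1 p.2)
      ≤ #(J'.biUnion fun p => Icc p.1 p.2) + #(Icc (b.1 - (b.2 - b.1)) (b.2 + (b.2 - b.1))) :=
        (card_le_card hcover).trans (card_union_le _ _)
    _ ≤ 3 * ∑ p ∈ I', #(Icc p.1 p.2) + 3 * #(Icc b.1 b.2) := by
        gcongr
        simp only [Nat.card_Icc]
        omega
    _ = 3 * ∑ p ∈ insert b I', #(Icc p.1 p.2) := by
        rw [sum_insert fun h => hbJ' (hI'J' h)]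
        ring

namespace IsIntervalPacking

variable {I I' : Finset (ℕ × ℕ)}

lemma eq_of_snd_mem_Icc (hI : IsIntervalPacking I) {p q : ℕ × ℕ} (hp : p ∈ I) (hq : q ∈ I)
    (h₁ : p.1 ≤ q.2) (h₂ : q.2 ≤ p.2) : q = p := by
  by_contra hne
  exact disjoint_left.mp (hI.2 hq hp hne) (by simpa using hI.1 q hq) (mem_Icc.mpr ⟨h₁, h₂⟩)

/-- The interval of a packing starting at `s` ends at the first right endpoint after `s`. -/
lemma subset_of_image_eq (hI : IsIntervalPacking I) (hI' : IsIntervalPacking I')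
    (hfst : I.image Prod.fst = I'.image Prod.fst) (hsnd : I.image Prod.snd = I'.image Prod.snd) :
    I ⊆ I' := by
  intro p hp
  obtain ⟨q, hq, hqp⟩ := mem_image.mp (hfst ▸ mem_image_of_mem Prod.fst hp)
  have hq₂ : q.2 = p.2 := by
    rcases lt_trichotomy q.2 p.2 with hlt | heq | hgt
    · obtain ⟨p', hp', hp'q⟩ := mem_image.mp (hsnd ▸ mem_image_of_mem Prod.snd hq)
      obtain rfl := hI.eq_of_snd_mem_Icc hp hp' (by have := hI'.1 q hq; omega) (by omega)
      omega
    · exact heq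
    · obtain ⟨q', hq', hq'p⟩ := mem_image.mp (hsnd.symm ▸ mem_image_of_mem Prod.snd hp)
      obtain rfl := hI'.eq_of_snd_mem_Icc hq hq' (by have := hI.1 p hp; omega) (by omega)
      omega
  rwa [← Prod.ext hqp hq₂]

end IsIntervalPacking

lemma card_mul_le_of_mem_longIntervalPackings {n : ℕ} {L : ℝ} {I : Finset (ℕ × ℕ)}
    (hI : I ∈ longIntervalPackings n L) : #I * L ≤ n := by
  obtain ⟨⟨-, hdisj⟩, hlong⟩ := mem_longIntervalPackings.mp hI
  have hcover : I.biUnion (fun p => Icc p.1 p.2) ⊆ range n := fun t ht => by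
    obtain ⟨p, hp, ht⟩ := mem_biUnion.mp ht
    exact mem_range.mpr ((mem_Icc.mp ht).2.trans_lt (hlong p hp).1)
  calc #I * L = ∑ _p ∈ I, L := by rw [sum_const, nsmul_eq_mul]
    _ ≤ ∑ p ∈ I, (#(Icc p.1 p.2) : ℝ) := sum_le_sum fun p hp => (hlong p hp).2.le
    _ = #(I.biUnion fun p => Icc p.1 p.2) := by rw [card_biUnion hdisj, Nat.cast_sum]
    _ ≤ n := by exact_mod_cast (card_le_card hcover).trans_eq (card_range n)

lemma card_filter_card_le_le_sum_choose (n M : ℕ) :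
    #((range n).powerset.filter fun S => #S ≤ M) ≤ ∑ j ∈ range (M + 1), n.choose j := by
  calc _ ≤ #((range (M + 1)).biUnion fun j => powersetCard j (range n)) := by
        refine card_le_card fun S hS => ?_
        obtain ⟨hS, hSM⟩ := mem_filter.mp hS
        exact mem_biUnion.mpr ⟨#S, mem_range.mpr (Nat.lt_succ_of_le hSM),
          mem_powersetCard.mpr ⟨mem_powerset.mp hS, rfl⟩⟩
    _ ≤ ∑ j ∈ range (M + 1), #(powersetCard j (range n)) := card_biUnion_le
    _ = ∑ j ∈ range (M + 1), n.choose j := by simp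

lemma sum_range_choose_le_exp {n M : ℕ} {L : ℝ} (hL : 1 ≤ L) (hM : M * L ≤ n) :
    (∑ j ∈ range (M + 1), (n.choose j : ℝ)) ≤ exp (n / L * (log L + 1)) := by
  have hL0 : 0 < L := by linarith
  have hMn : M ≤ n := by exact_mod_cast (le_mul_of_one_le_right (Nat.cast_nonneg M) hL).trans hM
  have hMlog : M * log L ≤ n / L * log L :=
    mul_le_mul_of_nonneg_right ((le_div_iff₀ hL0).mpr hM) (log_nonneg hL)
  calc (∑ j ∈ range (M + 1), (n.choose j : ℝ))
      ≤ ∑ j ∈ range (n + 1), n.choose j * L⁻¹ ^ j * L ^ M := by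
        refine sum_le_sum_of_subset_of_nonneg (range_subset_range.mpr (by omega))
          (fun j _ _ => by positivity) |>.trans' (sum_le_sum fun j hj => ?_)
        rw [mul_assoc]
        refine le_mul_of_one_le_right (Nat.cast_nonneg _) ?_
        rw [inv_pow, ← div_eq_inv_mul, one_le_div (by positivity)]
        exact pow_le_pow_right₀ hL (Nat.lt_succ_iff.mp (mem_range.mp hj))
    _ = (L⁻¹ + 1) ^ n * L ^ M := by
        rw [add_pow, sum_mul]
        exact sum_congr rfl fun j _ => by ring
    _ ≤ exp (n / L) * exp (n / L * log L) := by
        gcongr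
        · calc (L⁻¹ + 1) ^ n ≤ exp L⁻¹ ^ n := by gcongr; exact add_one_le_exp _
            _ = exp (n / L) := by rw [← exp_nat_mul, div_eq_mul_inv]
        · calc L ^ M = exp (M * log L) := by rw [exp_nat_mul, exp_log hL0]
            _ ≤ exp (n / L * log L) := exp_le_exp.mpr hMlog
    _ = exp (n / L * (log L + 1)) := by rw [← exp_add]; ring_nf

theorem card_longIntervalPackings_le {n : ℕ} {L : ℝ} (hL : exp (1 / 2) ≤ L) :
    (#(longIntervalPackings n L) : ℝ) ≤ exp (6 * n / L * log L) := by
  have hL1 : 1 ≤ L := (one_le_exp (by norm_num)).trans hL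
  have hlogL : 1 / 2 ≤ log L := (le_log_iff_exp_le (by linarith)).mpr hL
  set M := ⌊n / L⌋₊
  have hM : M * L ≤ n := (le_div_iff₀ (by linarith)).mp (Nat.floor_le (by positivity))
  set T := (range n).powerset.filter fun S => #S ≤ M
  have hmem : ∀ I ∈ longIntervalPackings n L, ∀ f : ℕ × ℕ → ℕ, (∀ p ∈ I, f p ≤ p.2) →
      I.image f ∈ T := by
    intro I hI f hf
    have hIM : #I ≤ M := Nat.le_floor <| (le_div_iff₀ (by linarith)).mpr <|
      card_mul_le_of_mem_longIntervalPackings hI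
    refine mem_filter.mpr ⟨mem_powerset.mpr fun t ht => ?_, card_image_le.trans hIM⟩
    obtain ⟨p, hp, rfl⟩ := mem_image.mp ht
    exact mem_range.mpr ((hf p hp).trans_lt ((mem_longIntervalPackings.mp hI).2 p hp).1)
  have hinj : Set.InjOn (fun I : Finset (ℕ × ℕ) => (I.image Prod.fst, I.image Prod.snd))
      (longIntervalPackings n L) := by
    intro I hI I' hI' h
    obtain ⟨hfst, hsnd⟩ := Prod.ext_iff.mp h
    have hI := (mem_longIntervalPackings.mp hI).1
    have hI' := (mem_longIntervalPackings.mp hI').1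
    exact (hI.subset_of_image_eq hI' hfst hsnd).antisymm
      (hI'.subset_of_image_eq hI hfst.symm hsnd.symm)
  have hcard : #(longIntervalPackings n L) ≤ #T * #T := by
    rw [← card_product]
    refine card_le_card_of_injOn _ (fun I hI => mem_product.mpr ⟨?_, ?_⟩) hinj
    · exact hmem I hI _ (mem_longIntervalPackings.mp hI).1.1
    · exact hmem I hI _ fun p _ => le_rfl
  have hT : (#T : ℝ) ≤ exp (n / L * (log L + 1)) :=
    (Nat.cast_le.mpr (card_filter_card_le_le_sum_choose n M)).trans
      (by simpa using sum_range_choose_le_exp hL1 hM)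
  calc (#(longIntervalPackings n L) : ℝ) ≤ #T * #T := by exact_mod_cast hcard
    _ ≤ exp (n / L * (log L + 1)) * exp (n / L * (log L + 1)) := by gcongr
    _ ≤ exp (6 * n / L * log L) := by
        rw [← exp_add, exp_le_exp]
        have : (0 : ℝ) ≤ n / L := by positivity
        have : 6 * n / L * log L = n / L * (6 * log L) := by ring
        nlinarith

namespace Multigraph

variable {V E : Type} (G : Multigraph V E)

noncomputable def walkMass (n : ℕ) (x : V) (A : Set (Fin n → E)) : ℝ≥0∞ :=
  ∑' σ : {σ : Fin n → E // G.IsPath σ ∧ G.StartsAt σ x ∧ σ ∈ A},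
    ENNReal.ofReal (G.pathWeight σ.1)

def endVertex (x : V) : {a : ℕ} → (Fin a → E) → V
  | 0, _ => x
  | a + 1, α => G.head (α (Fin.last a))

def IsCycleSegment {n : ℕ} (σ : Fin n → E) (s u : ℕ) : Prop :=
  ∃ (hs : s < n) (hu : u < n), G.tail (σ ⟨s, hs⟩) = G.head (σ ⟨u, hu⟩)

variable {G}

lemma pathWeight_nonneg {n : ℕ} (σ : Fin n → E) : 0 ≤ G.pathWeight σ :=
  Finset.prod_nonneg fun _ _ => by positivity

lemma pathWeight_append {a b : ℕ} (α : Fin a → E) (β : Fin b → E) :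
    G.pathWeight (Fin.append α β) = G.pathWeight α * G.pathWeight β := by
  simp only [pathWeight, Fin.prod_univ_add, Fin.append_left, Fin.append_right]

lemma walkMass_mono {n : ℕ} {x : V} {A B : Set (Fin n → E)}
    (h : ∀ σ, G.IsPath σ → G.StartsAt σ x → σ ∈ A → σ ∈ B) :
    G.walkMass n x A ≤ G.walkMass n x B :=
  ENNReal.tsum_mono_subtype (fun σ => ENNReal.ofReal (G.pathWeight σ))
    fun σ ⟨hp, hs, hA⟩ => ⟨hp, hs, h σ hp hs hA⟩

lemma walkMass_eq_zero {n : ℕ} {x : V} {A : Set (Fin n → E)} (h : ∀ σ, σ ∉ A) :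
    G.walkMass n x A = 0 := by
  have : IsEmpty {σ : Fin n → E // G.IsPath σ ∧ G.StartsAt σ x ∧ σ ∈ A} :=
    ⟨fun σ => h σ.1 σ.2.2.2⟩
  simp [walkMass]

lemma walkMass_biUnion_le {ι : Type*} {n : ℕ} {x : V} {A : Set (Fin n → E)} (s : Finset ι)
    (C : ι → Set (Fin n → E)) (h : A ⊆ ⋃ i ∈ s, C i) :
    G.walkMass n x A ≤ ∑ i ∈ s, G.walkMass n x (C i) := by
  calc G.walkMass n x A
      ≤ ∑' σ : ⋃ i ∈ s, {σ | G.IsPath σ ∧ G.StartsAt σ x ∧ σ ∈ C i},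
          ENNReal.ofReal (G.pathWeight σ.1) := by
        refine ENNReal.tsum_mono_subtype (fun σ => ENNReal.ofReal (G.pathWeight σ)) ?_
        rintro σ ⟨hp, hs, hA⟩
        obtain ⟨i, hi, hC⟩ := Set.mem_iUnion₂.mp (h hA)
        exact Set.mem_iUnion₂.mpr ⟨i, hi, hp, hs, hC⟩
    _ ≤ _ := ENNReal.tsum_biUnion_le (fun σ => ENNReal.ofReal (G.pathWeight σ)) s _

lemma isPath_startsAt_of_append {a b : ℕ} {x : V} {α : Fin a → E} {β : Fin b → E}
    (hp : G.IsPath (Fin.append α β)) (hs : G.StartsAt (Fin.append α β) x) :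
    (G.IsPath α ∧ G.StartsAt α x) ∧ G.IsPath β ∧ G.StartsAt β (G.endVertex x α) := by
  refine ⟨⟨fun i hi => ?_, fun ha => ?_⟩, fun i hi => ?_, fun hb => ?_⟩
  · simpa [Fin.append_mk_of_lt _ _ _ hi] using hp (Fin.castAdd b i) (by simp; omega)
  · rw [← Fin.append_mk_of_lt α β (by omega) ha]
    exact hs (by omega)
  · have := hp (Fin.natAdd a i) (by simp; omega)
    rw [Fin.append_right, Fin.append_mk_of_le _ _ _ (by simp; omega)] at this
    simpa [Nat.add_assoc] using this
  · cases a with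
    | zero =>
      have := hs (by omega)
      rwa [Fin.append_mk_of_le _ _ _ le_rfl] at this
    | succ a =>
      have := (hp (Fin.castAdd b (Fin.last a)) (by simp; omega)).symm
      rw [Fin.append_left, Fin.append_mk_of_le _ _ _ (by simp)] at this
      simpa [endVertex] using this

lemma walkMass_eq_tsum_indicator (n : ℕ) (x : V) (A : Set (Fin n → E)) :
    G.walkMass n x A = ∑' σ, {σ | G.IsPath σ ∧ G.StartsAt σ x ∧ σ ∈ A}.indicator
      (fun σ => ENNReal.ofReal (G.pathWeight σ)) σ :=
  tsum_subtype {σ | G.IsPath σ ∧ G.StartsAt σ x ∧ σ ∈ A} fun σ => ENNReal.ofReal (G.pathWeight σ)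

/-- The Markov property of the walk at time `a`, as an inequality. -/
lemma walkMass_append_le {a b : ℕ} {x : V} {S : Set (Fin (a + b) → E)} {A : Set (Fin a → E)}
    {B : Set (Fin b → E)} {c : ℝ≥0∞} (hS : ∀ α β, Fin.append α β ∈ S → α ∈ A ∧ β ∈ B)
    (hB : ∀ y, G.walkMass b y B ≤ c) :
    G.walkMass (a + b) x S ≤ G.walkMass a x A * c := by
  have hsplit : ∀ (α : Fin a → E) (β : Fin b → E),
      {σ | G.IsPath σ ∧ G.StartsAt σ x ∧ σ ∈ S}.indicator
          (fun σ => ENNReal.ofReal (G.pathWeight σ)) (Fin.append α β) ≤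
        {α | G.IsPath α ∧ G.StartsAt α x ∧ α ∈ A}.indicator
            (fun α => ENNReal.ofReal (G.pathWeight α)) α *
          {β | G.IsPath β ∧ G.StartsAt β (G.endVertex x α) ∧ β ∈ B}.indicator
            (fun β => ENNReal.ofReal (G.pathWeight β)) β := by
    intro α β
    by_cases h : Fin.append α β ∈ {σ | G.IsPath σ ∧ G.StartsAt σ x ∧ σ ∈ S}
    · obtain ⟨hp, hs, hσ⟩ := id h
      obtain ⟨⟨hpα, hsα⟩, hpβ, hsβ⟩ := isPath_startsAt_of_append hp hs
      obtain ⟨hα, hβ⟩ := hS α β hσ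
      have hα' : α ∈ {α | G.IsPath α ∧ G.StartsAt α x ∧ α ∈ A} := ⟨hpα, hsα, hα⟩
      have hβ' : β ∈ {β | G.IsPath β ∧ G.StartsAt β (G.endVertex x α) ∧ β ∈ B} := ⟨hpβ, hsβ, hβ⟩
      rw [Set.indicator_of_mem h, Set.indicator_of_mem hα', Set.indicator_of_mem hβ',
        pathWeight_append, ENNReal.ofReal_mul (pathWeight_nonneg α)]
    · rw [Set.indicator_of_notMem h]
      exact zero_le
  rw [walkMass_eq_tsum_indicator, ← (Fin.appendEquiv a b).tsum_eq, ENNReal.tsum_prod']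
  calc _ ≤ ∑' α, ∑' β, _ := ENNReal.tsum_le_tsum fun α => ENNReal.tsum_le_tsum (hsplit α)
    _ = ∑' α, {α | G.IsPath α ∧ G.StartsAt α x ∧ α ∈ A}.indicator
            (fun α => ENNReal.ofReal (G.pathWeight α)) α * G.walkMass b (G.endVertex x α) B := by
      simp only [ENNReal.tsum_mul_left, walkMass_eq_tsum_indicator]
    _ ≤ ∑' α, {α | G.IsPath α ∧ G.StartsAt α x ∧ α ∈ A}.indicator
            (fun α => ENNReal.ofReal (G.pathWeight α)) α * c := by
      gcongr with α
      exact hB _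
    _ = G.walkMass a x A * c := by rw [ENNReal.tsum_mul_right, walkMass_eq_tsum_indicator]

lemma walkMass_one_univ_le_one (y : V) : G.walkMass 1 y Set.univ ≤ 1 := by
  have hstep : G.walkMass 1 y Set.univ =
      ∑' _ : {e : E // G.tail e = y}, ENNReal.ofReal ((G.degree y : ℝ)⁻¹) := by
    rw [walkMass, ← (Equiv.subtypeEquiv (p := fun e => G.tail e = y)
      (Equiv.funUnique (Fin 1) E).symm fun e =>
        ⟨fun h => ⟨fun i hi => by omega, fun _ => h, trivial⟩, fun h => h.2.1 one_pos⟩).tsum_eq]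
    refine tsum_congr fun e => ?_
    simp [pathWeight, e.2]
  rw [hstep]
  rcases finite_or_infinite {e : E // G.tail e = y} with hfin | hinf
  · have := Fintype.ofFinite {e : E // G.tail e = y}
    rw [tsum_fintype, Finset.sum_const, Finset.card_univ, nsmul_eq_mul, ← ENNReal.ofReal_natCast,
      ← ENNReal.ofReal_mul (by positivity), degree, Nat.card_eq_fintype_card]
    exact ENNReal.ofReal_le_one.mpr (mul_inv_le_one_of_le₀ le_rfl (by positivity))
  -- an infinite star has `degree = Nat.card = 0`, so every step has weight `0⁻¹ = 0`
  · simp [degree, Nat.card_eq_zero_of_infinite]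

lemma walkMass_univ_le_one (n : ℕ) (x : V) : G.walkMass n x Set.univ ≤ 1 := by
  induction n generalizing x with
  | zero =>
    rw [walkMass_eq_tsum_indicator, tsum_fintype, Fintype.sum_unique]
    exact (Set.indicator_le_self _ _ _).trans (by simp [pathWeight])
  | succ n ih =>
    simpa using walkMass_append_le (x := x) (A := Set.univ) (B := Set.univ)
      (fun _ _ _ => ⟨trivial, trivial⟩) walkMass_one_univ_le_one |>.trans
      (mul_le_one' (ih x) le_rfl)

lemma walkMass_le_one (n : ℕ) (x : V) (A : Set (Fin n → E)) : G.walkMass n x A ≤ 1 :=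
  (walkMass_mono fun _ _ _ _ => Set.mem_univ _).trans (walkMass_univ_le_one n x)

lemma walkMass_eq_ofReal_tsum (n : ℕ) (x : V) (A : Set (Fin n → E)) :
    G.walkMass n x A = ENNReal.ofReal
      (∑' σ : {σ : Fin n → E // G.IsPath σ ∧ G.StartsAt σ x ∧ σ ∈ A}, G.pathWeight σ.1) := by
  have hfin : G.walkMass n x A ≠ ⊤ := ne_top_of_le_ne_top ENNReal.one_ne_top (walkMass_le_one n x A)
  have hsum : Summable fun σ : {σ : Fin n → E // G.IsPath σ ∧ G.StartsAt σ x ∧ σ ∈ A} =>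
      G.pathWeight σ.1 := by
    rw [walkMass] at hfin
    refine (ENNReal.summable_toReal hfin).congr fun σ => ?_
    exact ENNReal.toReal_ofReal (pathWeight_nonneg _)
  exact (ENNReal.ofReal_tsum_of_nonneg (fun _ => pathWeight_nonneg _) hsum).symm

lemma IsCycleSegment.append_left {a b s u : ℕ} {α : Fin a → E} {β : Fin b → E}
    (h : G.IsCycleSegment (Fin.append α β) s u) (hs : s < a) (hu : u < a) :
    G.IsCycleSegment α s u := by
  obtain ⟨_, _, h⟩ := h
  exact ⟨hs, hu, by rwa [Fin.append_mk_of_lt _ _ _ hs, Fin.append_mk_of_lt _ _ _ hu] at h⟩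

lemma IsCycleSegment.append_right {a b s u s' u' : ℕ} {α : Fin a → E} {β : Fin b → E}
    (h : G.IsCycleSegment (Fin.append α β) s u) (hs : s = a + s') (hu : u = a + u') :
    G.IsCycleSegment β s' u' := by
  subst hs hu
  obtain ⟨hs, hu, h⟩ := h
  refine ⟨by omega, by omega, ?_⟩
  simpa [Fin.append_mk_of_le] using h

variable {r : ℝ≥0∞}

lemma walkMass_isCycleSegment_zero_le
    (hr : ∀ y k, 1 ≤ k → G.walkMass k y {γ | G.EndsAt γ y} ≤ r ^ k)
    (m : ℕ) (y : V) {c : ℕ} (hc : 1 ≤ c) :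
    G.walkMass m y {β | G.IsCycleSegment β 0 (c - 1)} ≤ r ^ c := by
  by_cases hcm : c ≤ m
  · obtain ⟨m, rfl⟩ := Nat.exists_eq_add_of_le hcm
    calc _ ≤ G.walkMass c y {γ | G.IsCycleSegment γ 0 (c - 1)} * 1 :=
          walkMass_append_le (B := Set.univ)
            (fun _ _ h => ⟨h.append_left (by omega) (by omega), trivial⟩)
            (walkMass_univ_le_one m)
      _ ≤ G.walkMass c y {γ | G.EndsAt γ y} := by
          rw [mul_one]
          exact walkMass_mono fun γ _ hs ⟨h0, _, h⟩ _ => h ▸ hs h0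
      _ ≤ r ^ c := hr y c hc
  · rw [walkMass_eq_zero fun β h => hcm (by obtain ⟨_, hu, _⟩ := h; omega)]
    exact zero_le

theorem walkMass_cycleSegments_le
    (hr : ∀ y k, 1 ≤ k → G.walkMass k y {γ | G.EndsAt γ y} ≤ r ^ k)
    {I : Finset (ℕ × ℕ)} (hI : IsIntervalPacking I) (n : ℕ) (x : V) :
    G.walkMass n x {σ | ∀ p ∈ I, G.IsCycleSegment σ p.1 p.2} ≤
      r ^ ∑ p ∈ I, #(Icc p.1 p.2) := by
  induction I using Finset.induction_on_max_value (f := Prod.fst) (ι := ℕ × ℕ)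
    generalizing n x with
  | empty => simpa using walkMass_le_one n x _
  | insert p I hpI hmax ih =>
    obtain ⟨hle, hdisj⟩ := hI
    have hI : IsIntervalPacking I :=
      ⟨fun q hq => hle q (mem_insert_of_mem hq), hdisj.subset (by simp)⟩
    have hp : p.1 ≤ p.2 := hle p (mem_insert_self p I)
    have hbefore : ∀ q ∈ I, q.2 < p.1 := by
      intro q hq
      by_contra! hqp
      have hne : q ≠ p := fun h => hpI (h ▸ hq)
      exact Finset.disjoint_left.mp (hdisj (by simp [hq]) (by simp) hne)
        (by simpa using ⟨hmax q hq, hqp⟩) (by simpa using hp)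
    by_cases hpn : p.2 < n
    · -- split the walk where the last interval `p` starts
      obtain ⟨m, rfl⟩ : ∃ m, n = p.1 + m := ⟨n - p.1, by omega⟩
      have hlen : 1 ≤ #(Icc p.1 p.2) := by simp; omega
      calc _ ≤ G.walkMass p.1 x {α | ∀ q ∈ I, G.IsCycleSegment α q.1 q.2} *
            r ^ #(Icc p.1 p.2) := by
            refine walkMass_append_le (fun α β h => ⟨fun q hq => ?_, ?_⟩)
              fun y => walkMass_isCycleSegment_zero_le hr m y hlen
            · have := hI.1 q hq
              have := hbefore q hq
              exact (h q (mem_insert_of_mem hq)).append_left (by omega) (by omega)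
            · exact (h p (mem_insert_self p I)).append_right (by omega) (by simp; omega)
        _ ≤ r ^ (∑ q ∈ I, #(Icc q.1 q.2)) * r ^ #(Icc p.1 p.2) := by
            gcongr
            exact ih hI p.1 x
        _ = r ^ ∑ q ∈ insert p I, #(Icc q.1 q.2) := by
            rw [sum_insert hpI, pow_add, mul_comm]
    · rw [walkMass_eq_zero fun σ h => hpn (h p (mem_insert_self p I)).2.1]
      exact zero_le

variable {ρ : ℝ}

lemma walkMass_endsAt_le (hρ0 : 0 ≤ ρ)
    (hret : ∀ (x : V) (k : ℕ), 1 ≤ k →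
      ∑' σ : {σ : Fin k → E // G.IsCycleAt σ x}, G.pathWeight σ.1 ≤ ρ ^ k)
    (y : V) (k : ℕ) (hk : 1 ≤ k) :
    G.walkMass k y {γ | G.EndsAt γ y} ≤ ENNReal.ofReal ρ ^ k := by
  rw [walkMass_eq_ofReal_tsum, ← ENNReal.ofReal_pow hρ0]
  exact ENNReal.ofReal_le_ofReal (hret y k hk)

lemma walkMass_cycleSegments_le_rpow (hρ0 : 0 ≤ ρ) (hρ1 : ρ ≤ 1)
    (hret : ∀ (x : V) (k : ℕ), 1 ≤ k →
      ∑' σ : {σ : Fin k → E // G.IsCycleAt σ x}, G.pathWeight σ.1 ≤ ρ ^ k)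
    {I : Finset (ℕ × ℕ)} (hI : IsIntervalPacking I) {c : ℝ} (hc0 : 0 ≤ c)
    (hc : c ≤ ∑ p ∈ I, (#(Icc p.1 p.2) : ℝ)) (n : ℕ) (x : V) :
    G.walkMass n x {σ | ∀ p ∈ I, G.IsCycleSegment σ p.1 p.2} ≤ ENNReal.ofReal (ρ ^ c) := by
  refine (walkMass_cycleSegments_le (walkMass_endsAt_le hρ0 hret) hI n x).trans ?_
  rw [← ENNReal.ofReal_pow hρ0, ← Real.rpow_natCast]
  exact ENNReal.ofReal_le_ofReal
    (Real.rpow_le_rpow_of_exponent_ge' hρ0 hρ1 hc0 (by exact_mod_cast hc))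

variable (G) in
open Classical in
lemma exists_mem_longIntervalPackings_of_isLongCycleTime {n : ℕ} (σ : Fin n → E) (L : ℝ) :
    ∃ I ∈ longIntervalPackings n L, (∀ p ∈ I, G.IsCycleSegment σ p.1 p.2) ∧
      Nat.card {t : Fin n // G.IsLongCycleTime σ L t} ≤ 3 * ∑ p ∈ I, #(Icc p.1 p.2) := by
  let J : Finset (ℕ × ℕ) := ((univ : Finset (Fin n × Fin n)).filter fun q =>
      q.1 ≤ q.2 ∧ G.tail (σ q.1) = G.head (σ q.2) ∧ L < (q.2 : ℝ) - q.1 + 1).image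
    fun q => (q.1.val, q.2.val)
  have hJ : ∀ p ∈ J,
      p.1 ≤ p.2 ∧ p.2 < n ∧ L < #(Icc p.1 p.2) ∧ G.IsCycleSegment σ p.1 p.2 := by
    intro p hp
    obtain ⟨⟨s, u⟩, hq, rfl⟩ := mem_image.mp hp
    obtain ⟨hsu, hcyc, hlen⟩ := (mem_filter.mp hq).2
    have hsu' : s.1 ≤ u.1 := hsu
    refine ⟨hsu, u.2, ?_, s.2, u.2, hcyc⟩
    rw [Nat.card_Icc, Nat.cast_sub (show s.1 ≤ u.1 + 1 by omega)]
    push_cast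
    linarith
  obtain ⟨I, hIJ, hI, hcard⟩ :=
    exists_isIntervalPacking_card_biUnion_Icc_le J fun p hp => (hJ p hp).1
  refine ⟨I, mem_longIntervalPackings.mpr ⟨hI, fun p hp => ⟨(hJ p (hIJ hp)).2.1,
    (hJ p (hIJ hp)).2.2.1⟩⟩, fun p hp => (hJ p (hIJ hp)).2.2.2, le_trans ?_ hcard⟩
  rw [Nat.card_eq_fintype_card, Fintype.card_subtype]
  refine card_le_card_of_injOn Fin.val (fun t ht => ?_) Fin.val_injective.injOn
  obtain ⟨s, u, hst, htu, hcyc, hlen⟩ := (mem_filter.mp ht).2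
  exact mem_biUnion.mpr ⟨(s.1, u.1), mem_image.mpr ⟨(s, u),
    mem_filter.mpr ⟨mem_univ _, hst.trans htu, hcyc, hlen⟩, rfl⟩, mem_Icc.mpr ⟨hst, htu⟩⟩

end Multigraph

open Multigraph in
theorem long_cycle_times_bound_general {V E : Type} (G : Multigraph V E)
    (ρ : ℝ) (hρ0 : 0 ≤ ρ) (hρ1 : ρ < 1)
    (hret : ∀ (x : V) (k : ℕ), 1 ≤ k →
      ∑' σ : {σ : Fin k → E // G.IsCycleAt σ x}, G.pathWeight σ.1 ≤ ρ ^ k)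
    (o : V) (n : ℕ) (ε : ℝ) (hε : 0 < ε)
    (L : ℝ) (hL : 2 * Real.exp 2 < L) :
    ∑' σ : {σ : Fin n → E // G.IsPath σ ∧ G.StartsAt σ o ∧
        ε * n ≤ (Nat.card {t : Fin n // G.IsLongCycleTime σ L t} : ℝ)},
      G.pathWeight σ.1 ≤
      Real.exp ((6 * n / L) * Real.log L) * ρ ^ (ε * n / 3 : ℝ) / (1 - ρ) := by
  let 𝓘 := (longIntervalPackings n L).filter fun I => ε * n / 3 ≤ ∑ p ∈ I, (#(Icc p.1 p.2) : ℝ)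
  have hcover : {σ : Fin n → E | ε * n ≤ (Nat.card {t : Fin n // G.IsLongCycleTime σ L t} : ℝ)}
      ⊆ ⋃ I ∈ 𝓘, {σ | ∀ p ∈ I, G.IsCycleSegment σ p.1 p.2} := by
    intro σ hσ
    obtain ⟨I, hI, hcyc, hcard⟩ := G.exists_mem_longIntervalPackings_of_isLongCycleTime σ L
    have : ε * n ≤ 3 * ∑ p ∈ I, (#(Icc p.1 p.2) : ℝ) := by
      exact_mod_cast hσ.trans (Nat.cast_le.mpr hcard)
    exact Set.mem_iUnion₂.mpr ⟨I, mem_filter.mpr ⟨hI, by linarith⟩, hcyc⟩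
  have hL' : exp (1 / 2) ≤ L := by
    linarith [exp_le_exp.mpr (by norm_num : (1 / 2 : ℝ) ≤ 2), exp_pos 2]
  have hmass := calc
    G.walkMass n o {σ | ε * n ≤ (Nat.card {t : Fin n // G.IsLongCycleTime σ L t} : ℝ)}
      ≤ ∑ I ∈ 𝓘, G.walkMass n o {σ | ∀ p ∈ I, G.IsCycleSegment σ p.1 p.2} :=
        walkMass_biUnion_le 𝓘 _ hcover
    _ ≤ ∑ _I ∈ 𝓘, ENNReal.ofReal (ρ ^ (ε * n / 3 : ℝ)) := sum_le_sum fun I hI =>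
        walkMass_cycleSegments_le_rpow hρ0 hρ1.le hret
          (mem_longIntervalPackings.mp (mem_filter.mp hI).1).1 (by positivity)
          (mem_filter.mp hI).2 n o
    _ ≤ ENNReal.ofReal (exp (6 * n / L * log L) * ρ ^ (ε * n / 3 : ℝ)) := by
        rw [sum_const, nsmul_eq_mul, ENNReal.ofReal_mul (exp_pos _).le, ← ENNReal.ofReal_natCast]
        gcongr
        exact (Nat.cast_le.mpr (card_filter_le _ _)).trans (card_longIntervalPackings_le hL')
  rw [walkMass_eq_ofReal_tsum, ENNReal.ofReal_le_ofReal_iff (by positivity)] at hmass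
  exact hmass.trans (le_div_self (by positivity) (by linarith) (by linarith))

open Multigraph in
/-- If every return probability satisfies `P_x[cycle of length k] ≤ ρ^k` with
`ρ < 1`, then for `n ≥ 2`, `ε > 0` and `L > 2e²`, the probability that simple random
walk of length `n` from `o` has at least `εn` times lying in traversed cycles of
length `> L` is at most `e^{(6n/L)·log L} · ρ^{εn/3}/(1-ρ)`. -/
theorem long_cycle_times_bound {V E : Type} (G : Multigraph V E)
    (hdeg : ∀ v : V, 0 < G.degree v) (hconn : G.Connected)
    (ρ : ℝ) (hρ0 : 0 ≤ ρ) (hρ1 : ρ < 1)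
    (hret : ∀ (x : V) (k : ℕ), 1 ≤ k →
      ∑' σ : {σ : Fin k → E // G.IsCycleAt σ x}, G.pathWeight σ.1 ≤ ρ ^ k)
    (o : V) (n : ℕ) (hn : 2 ≤ n) (ε : ℝ) (hε : 0 < ε)
    (L : ℝ) (hL : 2 * Real.exp 2 < L) :
    ∑' σ : {σ : Fin n → E // G.IsPath σ ∧ G.StartsAt σ o ∧
        ε * n ≤ (Nat.card {t : Fin n // G.IsLongCycleTime σ L t} : ℝ)},
      G.pathWeight σ.1 ≤
      Real.exp ((6 * n / L) * Real.log L) * ρ ^ (ε * n / 3 : ℝ) / (1 - ρ) :=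
  long_cycle_times_bound_general G ρ hρ0 hρ1 hret o n ε hε L hL
end

section
/- Let Q_n(j) denote the probability that a binomial random variable with parameters ⌊n/2⌋ and 1/d takes the value j, where d ≥ 2 is fixed. For every c' > 0 there exists c > 0 such that for all n ≥ 1, all integers k ∈ [0, √n], and all integers j with |j - n/(2d)| ≤ c'√n, one has Q_{n+2k}(j+k) ≥ c · Q_n(j). -/
/-!
With `m = ⌊n/2⌋` both sides carry the same factor `(1 - 1/d)^(m - j)`, and
`C(m+k, j+k) / C(m, j) = ∏_{i=1}^k (m+i)/(j+i)`. In the window, `d (j + i) ≤ x² + b x` with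
`x = √(m+1)` and `b = 2d(c'+1)`, so each factor `(m+i)/(d(j+i))` is at least `x/(x+b)`, and
`(x/(x+b))^k ≥ exp(-kb/x) ≥ exp(-2b)` because `k ≤ √n ≤ 2x`.
-/

open Real

noncomputable def binomialWeight (m : ℕ) (p : ℝ) (j : ℕ) : ℝ :=
  (m.choose j : ℝ) * p ^ j * (1 - p) ^ (m - j)

theorem binomialWeight_nonneg {m j : ℕ} {p : ℝ} (hp₀ : 0 ≤ p) (hp₁ : p ≤ 1) :
    0 ≤ binomialWeight m p j := by
  have : 0 ≤ 1 - p := by linarith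
  unfold binomialWeight
  positivity

theorem choose_mul_le_choose_succ_succ {m j : ℕ} {s : ℝ} (h : s * (j + 1) ≤ m + 1) :
    (m.choose j : ℝ) * s ≤ ((m + 1).choose (j + 1) : ℝ) := by
  have hpascal : ((m + 1 : ℕ) : ℝ) * m.choose j = (m + 1).choose (j + 1) * ((j + 1 : ℕ) : ℝ) := by
    exact_mod_cast Nat.add_one_mul_choose_eq m j
  push_cast at hpascal
  have hj : (0 : ℝ) < j + 1 := by positivity
  rw [← mul_le_mul_iff_left₀ hj, ← hpascal, mul_assoc, mul_comm (m + 1 : ℝ)]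
  exact mul_le_mul_of_nonneg_left h (Nat.cast_nonneg _)

theorem choose_mul_pow_le_choose_add_add {m j k : ℕ} {s : ℝ} (hs : 0 ≤ s)
    (h : s * (j + k) ≤ m + 1) :
    (m.choose j : ℝ) * s ^ k ≤ ((m + k).choose (j + k) : ℝ) := by
  induction k with
  | zero => simp
  | succ k ih =>
    push_cast at h
    have hk : (0 : ℝ) ≤ k := k.cast_nonneg
    calc (m.choose j : ℝ) * s ^ (k + 1) = (m.choose j * s ^ k) * s := by ring
      _ ≤ (m + k).choose (j + k) * s := by gcongr; exact ih (by nlinarith)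
      _ ≤ (m + k + 1).choose (j + k + 1) :=
          choose_mul_le_choose_succ_succ (by push_cast; nlinarith)

theorem pow_mul_binomialWeight_le_binomialWeight_add_add {m j k : ℕ} {p s : ℝ}
    (hp₀ : 0 ≤ p) (hp₁ : p ≤ 1) (hs : 0 ≤ s) (h : s * (j + k) ≤ m + 1) :
    (s * p) ^ k * binomialWeight m p j ≤ binomialWeight (m + k) p (j + k) := by
  have hsub : m + k - (j + k) = m - j := by omega
  have hq : 0 ≤ p ^ (j + k) * (1 - p) ^ (m - j) := by
    have : 0 ≤ 1 - p := by linarith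
    positivity
  calc (s * p) ^ k * binomialWeight m p j
      = (m.choose j * s ^ k) * (p ^ (j + k) * (1 - p) ^ (m - j)) := by
        rw [binomialWeight, mul_pow, pow_add]; ring
    _ ≤ (m + k).choose (j + k) * (p ^ (j + k) * (1 - p) ^ (m - j)) := by
        gcongr; exact choose_mul_pow_le_choose_add_add hs h
    _ = binomialWeight (m + k) p (j + k) := by rw [binomialWeight, hsub, mul_assoc]

theorem exp_neg_le_div_add_pow {x b : ℝ} (hx : 0 < x) (hb : 0 ≤ b) (k : ℕ) :
    exp (-(k * b / x)) ≤ (x / (x + b)) ^ k := by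
  have hinv : x / (x + b) = (1 + b / x)⁻¹ := by field_simp
  have hpow : (1 + b / x) ^ k ≤ exp (k * b / x) := by
    calc (1 + b / x) ^ k ≤ exp (b / x) ^ k := by
          gcongr
          linarith [add_one_le_exp (b / x)]
      _ = exp (k * b / x) := by rw [← exp_nat_mul, mul_div_assoc]
  rw [hinv, inv_pow, exp_neg]
  exact inv_anti₀ (by positivity) hpow

theorem sqrt_le_two_mul_sqrt_div_two_add_one (n : ℕ) :
    √(n : ℝ) ≤ 2 * √((n / 2 + 1 : ℕ) : ℝ) := by
  have h : (n : ℝ) ≤ 2 ^ 2 * ((n / 2 + 1 : ℕ) : ℝ) := by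
    have : n ≤ 4 * (n / 2 + 1) := by omega
    exact_mod_cast this
  calc √(n : ℝ) ≤ √(2 ^ 2 * ((n / 2 + 1 : ℕ) : ℝ)) := sqrt_le_sqrt h
    _ = 2 * √((n / 2 + 1 : ℕ) : ℝ) := by rw [sqrt_mul (by positivity), sqrt_sq zero_le_two]

theorem mul_add_le_of_abs_sub_le {d c' : ℝ} {n j k : ℕ} (hd : 0 < d) (hc' : 0 ≤ c')
    (hk : (k : ℝ) ≤ √(n : ℝ)) (hj : |(j : ℝ) - n / (2 * d)| ≤ c' * √(n : ℝ)) :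
    d * ((j : ℝ) + k) ≤
      √((n / 2 + 1 : ℕ) : ℝ) * (√((n / 2 + 1 : ℕ) : ℝ) + 2 * d * (c' + 1)) := by
  set x := √((n / 2 + 1 : ℕ) : ℝ)
  have hxx : x * x = ((n / 2 + 1 : ℕ) : ℝ) := mul_self_sqrt (Nat.cast_nonneg _)
  have hnx : √(n : ℝ) ≤ 2 * x := sqrt_le_two_mul_sqrt_div_two_add_one n
  have hn : (n : ℝ) ≤ 2 * ((n / 2 + 1 : ℕ) : ℝ) := by
    exact_mod_cast (by omega : n ≤ 2 * (n / 2 + 1))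
  have hcenter : d * ((n : ℝ) / (2 * d)) = n / 2 := by field_simp
  nlinarith [mul_le_mul_of_nonneg_left (abs_le.mp hj).2 hd.le,
    mul_le_mul_of_nonneg_left (hk.trans hnx) hd.le,
    mul_le_mul_of_nonneg_left hnx (by positivity : 0 ≤ d * c')]

/-- **de Moivre–Laplace local comparison.**  Let `Q n j` be the probability that a
binomial random variable with parameters `⌊n/2⌋` and `1/d` equals `j`.  For every
`c' > 0` there is `c > 0` such that for all `n ≥ 1`, all integers `0 ≤ k ≤ √n`, and
all `j` with `|j - n/(2d)| ≤ c'√n`, one has `Q (n+2k) (j+k) ≥ c · Q n j`. -/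
theorem binomial_shift_comparison (d : ℕ) (hd : 2 ≤ d) (c' : ℝ) (hc' : 0 < c') :
    ∃ c : ℝ, 0 < c ∧
      ∀ n : ℕ, 1 ≤ n → ∀ k : ℕ, (k : ℝ) ≤ Real.sqrt n →
        ∀ j : ℕ, |(j : ℝ) - n / (2 * d)| ≤ c' * Real.sqrt n →
          c * (((n / 2).choose j : ℝ) * (1 / d) ^ j * (1 - 1 / d) ^ (n / 2 - j))
            ≤ (((n + 2 * k) / 2).choose (j + k) : ℝ) * (1 / d) ^ (j + k) *
                (1 - 1 / d) ^ ((n + 2 * k) / 2 - (j + k)) := by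
  have hd₀ : (0 : ℝ) < d := by positivity
  set b : ℝ := 2 * d * (c' + 1)
  have hb₀ : 0 ≤ b := by positivity
  refine ⟨exp (-(2 * b)), exp_pos _, fun n _ k hk j hj => ?_⟩
  set x := √((n / 2 + 1 : ℕ) : ℝ)
  have hx : 0 < x := sqrt_pos.mpr (by positivity)
  have hnx : √(n : ℝ) ≤ 2 * x := sqrt_le_two_mul_sqrt_div_two_add_one n
  have hwindow := mul_add_le_of_abs_sub_le hd₀ hc'.le hk hj
  have hs : (d * x / (x + b)) * ((j : ℝ) + k) ≤ ((n / 2 : ℕ) : ℝ) + 1 := by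
    rw [div_mul_eq_mul_div, div_le_iff₀ (by positivity)]
    have hxx : x * x = (n / 2 : ℕ) + 1 := by rw [mul_self_sqrt (by positivity)]; push_cast; rfl
    nlinarith
  have hsp : d * x / (x + b) * (1 / d) = x / (x + b) := by field_simp
  have hp₁ : 1 / (d : ℝ) ≤ 1 := div_le_one_of_le₀ (by exact_mod_cast (by omega : 1 ≤ d)) hd₀.le
  have hshift : (n + 2 * k) / 2 = n / 2 + k := by omega
  show exp (-(2 * b)) * binomialWeight (n / 2) (1 / d) j
    ≤ binomialWeight ((n + 2 * k) / 2) (1 / d) (j + k)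
  calc exp (-(2 * b)) * binomialWeight (n / 2) (1 / d) j
      ≤ (x / (x + b)) ^ k * binomialWeight (n / 2) (1 / d) j := by
        gcongr
        · exact binomialWeight_nonneg (by positivity) hp₁
        refine le_trans (exp_le_exp.mpr ?_) (exp_neg_le_div_add_pow hx hb₀ k)
        rw [neg_le_neg_iff, div_le_iff₀ hx]
        nlinarith [hk.trans hnx]
    _ ≤ binomialWeight ((n + 2 * k) / 2) (1 / d) (j + k) := by
        rw [← hsp, hshift]
        exact pow_mul_binomialWeight_le_binomialWeight_add_add (by positivity) hp₁
          (by positivity) hs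
end
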